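/- arXiv:2112.01018 — 6 statements merged into one kernel-verified Lean document; each statement's English description precedes it below -/
import Mathlib

section
/- Let 0 ≤ δ < 1, let p : ℝ → ℝ be measurable with |p(x)| ≤ P for all x ∈ [δ, 1], let η be a nonzero real number, and let φ : ℝ → ℂ be twice differentiable on [δ, 1] with φ(δ) = 1, φ'(δ) = 0, and φ''(x) = (p(x) + η²)·φ(x) for all x ∈ [δ, 1]. If there is a constant C > 0 with |φ(x)| ≤ C·exp(|η|·x) for all x ∈ [δ, 1], then for all x ∈ [δ, 1] one has |φ'(x)| ≤ C·(P + η²)/|η| · exp(|η|). In particular, |φ'(x)| ≤ C'·|η|·exp(|η|) for some constant C' whenever |η| is sufficiently large. -/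
open Set MeasureTheory

/-- Lemma 2.1 (esti-phi'): bound on the derivative of the solution of
`φ'' = (p + η²) φ` on `[δ, 1]` with `φ(δ) = 1`, `φ'(δ) = 0`. -/
theorem stmt_0
    (δ : ℝ) (hδ0 : 0 ≤ δ) (hδ1 : δ < 1)
    (p : ℝ → ℝ) (hp_meas : Measurable p)
    (P : ℝ) (hP : ∀ x ∈ Icc δ 1, |p x| ≤ P)
    (η : ℝ) (hη : η ≠ 0)
    (φ dφ ddφ : ℝ → ℂ)
    (hφ : ∀ x ∈ Icc δ 1, HasDerivAt φ (dφ x) x)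
    (hdφ : ∀ x ∈ Icc δ 1, HasDerivAt dφ (ddφ x) x)
    (hφδ : φ δ = 1) (hdφδ : dφ δ = 0)
    (heq : ∀ x ∈ Icc δ 1, ddφ x = ((p x : ℂ) + (η : ℂ) ^ 2) * φ x)
    (C : ℝ) (hC : 0 < C)
    (hbound : ∀ x ∈ Icc δ 1, ‖φ x‖ ≤ C * Real.exp (|η| * x)) :
    ∀ x ∈ Icc δ 1, ‖dφ x‖ ≤ C * (P + η ^ 2) / |η| * Real.exp |η| := by
  have hδmem : δ ∈ Icc δ 1 := ⟨le_refl δ, hδ1.le⟩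
  have hP0 : 0 ≤ P := le_trans (abs_nonneg _) (hP δ hδmem)
  have hη0 : 0 < |η| := abs_pos.mpr hη
  have hPη : (0:ℝ) ≤ P + η ^ 2 := by nlinarith [sq_nonneg η]
  intro x hx
  obtain ⟨hδx, hx1⟩ := hx
  have hsub : Icc δ x ⊆ Icc δ 1 := Icc_subset_Icc le_rfl hx1
  have hφcont : ContinuousOn φ (Icc δ x) := fun t ht =>
    ((hφ t (hsub ht)).continuousAt).continuousWithinAt
  -- pointwise bound on ddφ
  have hdd_bound : ∀ t ∈ Icc δ x, ‖ddφ t‖ ≤ (P + η ^ 2) * (C * Real.exp (|η| * t)) := by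
    intro t ht
    rw [heq t (hsub ht), norm_mul]
    have h1 : ‖((p t : ℂ) + (η : ℂ) ^ 2)‖ ≤ P + η ^ 2 := by
      have he : ((p t : ℂ) + (η : ℂ) ^ 2) = ((p t + η ^ 2 : ℝ) : ℂ) := by push_cast; ring
      rw [he, Complex.norm_real, Real.norm_eq_abs]
      have h2 := hP t (hsub ht)
      have h3 : |p t + η ^ 2| ≤ |p t| + |η ^ 2| := abs_add_le _ _
      rw [abs_of_nonneg (sq_nonneg η)] at h3
      linarith
    have h4 := hbound t (hsub ht)
    have h5 : (0:ℝ) ≤ C * Real.exp (|η| * t) := by positivity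
    exact mul_le_mul h1 h4 (norm_nonneg _) hPη
  -- integrability of ddφ on [δ, x]
  have hgmeas : AEStronglyMeasurable ddφ (MeasureTheory.volume.restrict (Icc δ x)) := by
    have hg : AEStronglyMeasurable (fun t => ((p t : ℂ) + (η : ℂ) ^ 2) * φ t)
        (MeasureTheory.volume.restrict (Icc δ x)) :=
      (((Complex.measurable_ofReal.comp hp_meas).add measurable_const).aestronglyMeasurable.mul
        (hφcont.aestronglyMeasurable measurableSet_Icc))
    refine hg.congr ?_
    filter_upwards [MeasureTheory.ae_restrict_mem measurableSet_Icc] with t ht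
    exact (heq t (hsub ht)).symm
  have hInt : IntervalIntegrable ddφ MeasureTheory.volume δ x := by
    rw [intervalIntegrable_iff_integrableOn_Icc_of_le hδx]
    refine ⟨hgmeas, MeasureTheory.HasFiniteIntegral.restrict_of_bounded
      (C := (P + η ^ 2) * (C * Real.exp |η|)) (by simp) ?_⟩
    filter_upwards [MeasureTheory.ae_restrict_mem measurableSet_Icc] with t ht
    refine (hdd_bound t ht).trans ?_
    have : Real.exp (|η| * t) ≤ Real.exp |η| := by
      apply Real.exp_le_exp.mpr
      nlinarith [ht.2, hη0.le]
    exact mul_le_mul_of_nonneg_left (mul_le_mul_of_nonneg_left this hC.le) hPη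
  -- FTC
  have hftc : ∫ t in δ..x, ddφ t = dφ x - dφ δ := by
    apply intervalIntegral.integral_eq_sub_of_hasDerivAt
    · intro t ht
      rw [uIcc_of_le hδx] at ht
      exact hdφ t (hsub ht)
    · exact hInt
  have hdx : dφ x = ∫ t in δ..x, ddφ t := by rw [hftc, hdφδ, sub_zero]
  -- exponential integral
  have hexpInt : ∫ t in δ..x, Real.exp (|η| * t)
      = (Real.exp (|η| * x) - Real.exp (|η| * δ)) / |η| := by
    have hd : ∀ t ∈ uIcc δ x, HasDerivAt (fun s => Real.exp (|η| * s) / |η|)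
        (Real.exp (|η| * t)) t := by
      intro t _
      have h1 : HasDerivAt (fun s : ℝ => |η| * s) |η| t := by
        simpa using (hasDerivAt_id t).const_mul |η|
      have h2 := (h1.exp).div_const |η|
      rwa [mul_div_cancel_right₀ _ hη0.ne'] at h2
    have hInte : IntervalIntegrable (fun t => Real.exp (|η| * t)) MeasureTheory.volume δ x :=
      (Real.continuous_exp.comp (continuous_const.mul continuous_id)).intervalIntegrable δ x
    have := intervalIntegral.integral_eq_sub_of_hasDerivAt hd hInte
    rw [this]; ring
  -- norm bound
  have hIntExp : IntervalIntegrable (fun t => (P + η ^ 2) * (C * Real.exp (|η| * t)))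
      MeasureTheory.volume δ x := by
    apply Continuous.intervalIntegrable
    continuity
  have hnorm : ‖dφ x‖ ≤ ∫ t in δ..x, (P + η ^ 2) * (C * Real.exp (|η| * t)) := by
    rw [hdx]
    refine (intervalIntegral.norm_integral_le_integral_norm hδx).trans ?_
    apply intervalIntegral.integral_mono_on hδx hInt.norm hIntExp
    exact hdd_bound
  have hval : ∫ t in δ..x, (P + η ^ 2) * (C * Real.exp (|η| * t))
      = (P + η ^ 2) * C * ((Real.exp (|η| * x) - Real.exp (|η| * δ)) / |η|) := by
    rw [intervalIntegral.integral_const_mul, intervalIntegral.integral_const_mul, hexpInt]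
    ring
  rw [hval] at hnorm
  refine hnorm.trans ?_
  have hexple : (Real.exp (|η| * x) - Real.exp (|η| * δ)) / |η| ≤ Real.exp |η| / |η| := by
    gcongr
    have h1 : Real.exp (|η| * x) ≤ Real.exp |η| := Real.exp_le_exp.mpr (by nlinarith [hη0.le])
    have h2 := (Real.exp_pos (|η| * δ)).le
    linarith
  calc (P + η ^ 2) * C * ((Real.exp (|η| * x) - Real.exp (|η| * δ)) / |η|)
      ≤ (P + η ^ 2) * C * (Real.exp |η| / |η|) :=
        mul_le_mul_of_nonneg_left hexple (by positivity)
    _ = C * (P + η ^ 2) / |η| * Real.exp |η| := by ring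
end

section
/- Laplace-side polynomial bound (Lemma 3.4): let 0 < α < 1, T > 0, and let m be a natural number. Let v, G : ℝ → ℝ be measurable functions such that v(t) = 0 for almost every t ∈ (0, T), |v(t)| ≤ C₃·exp(C₃·t) for all t ≥ 0 (for some constant C₃ > 0), G(t) = 0 for t ≥ T + 1, and |G(t)| ≤ M for all t ≥ 0 (for some M ≥ 0). Let s₀ > 0, B > 0, and let F : ℂ → ℂ satisfy, for every s > s₀ and z = i·s^{α/2} or z = −i·s^{α/2}: |F(z)| ≤ s^{(m−1)α+1}·( B·s^{α/2}·exp(s^{α/2})·|∫_0^∞ v(t)·e^{−st} dt| + |∫_0^∞ G(t)·e^{−st} dt| ). Then for every natural number N with N ≥ 2m − 1 + 2/α there exist constants C > 0 and s₁ > s₀ such that |F(z)| ≤ C·|z|^N for every s > s₁ and z = ±i·s^{α/2}. -/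
open Set MeasureTheory Complex

private lemma aux_exp_integral (a : ℝ) {b : ℝ} (hb : 0 < b) :
    ∫ x in Ioi a, Real.exp (-b * x) = Real.exp (-b * a) / b := by
  have h := MeasureTheory.integral_comp_mul_left_Ioi (fun x => Real.exp (-x)) a hb
  simp only [smul_eq_mul, integral_exp_neg_Ioi] at h
  simp only [neg_mul]
  rw [h]; ring

/-- Lemma 3.4: polynomial bound for `F` on the curve `z = ± i s^{α/2}`,
deduced from the Laplace-transform relation and vanishing of `v` on `(0, T)`. -/
theorem stmt_4 (α T : ℝ) (hα0 : 0 < α) (hα1 : α < 1) (hT : 0 < T) (m : ℕ)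
    (v G : ℝ → ℝ) (hv_meas : Measurable v) (hG_meas : Measurable G)
    (C₃ : ℝ) (hC₃ : 0 < C₃)
    (hv0 : ∀ᵐ t ∂(volume.restrict (Ioo 0 T)), v t = 0)
    (hv_bd : ∀ t ≥ (0 : ℝ), |v t| ≤ C₃ * Real.exp (C₃ * t))
    (hG0 : ∀ t ≥ T + 1, G t = 0)
    (M : ℝ) (hM : 0 ≤ M) (hG_bd : ∀ t ≥ (0 : ℝ), |G t| ≤ M)
    (s₀ B : ℝ) (hs₀ : 0 < s₀) (hB : 0 < B)
    (F : ℂ → ℂ)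
    (hF : ∀ s > s₀, ∀ z : ℂ,
      (z = Complex.I * ((s ^ (α / 2) : ℝ) : ℂ) ∨
        z = -(Complex.I * ((s ^ (α / 2) : ℝ) : ℂ))) →
      ‖F z‖ ≤ s ^ (((m : ℝ) - 1) * α + 1) *
        (B * s ^ (α / 2) * Real.exp (s ^ (α / 2)) *
            |∫ t in Ioi (0 : ℝ), v t * Real.exp (-s * t)| +
          |∫ t in Ioi (0 : ℝ), G t * Real.exp (-s * t)|)) :
    ∀ N : ℕ, 2 * (m : ℝ) - 1 + 2 / α ≤ N →
      ∃ C > (0 : ℝ), ∃ s₁ > s₀, ∀ s > s₁, ∀ z : ℂ,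
        (z = Complex.I * ((s ^ (α / 2) : ℝ) : ℂ) ∨
          z = -(Complex.I * ((s ^ (α / 2) : ℝ) : ℂ))) →
        ‖F z‖ ≤ C * ‖z‖ ^ N := by
  intro N hN
  refine ⟨B * C₃ * Real.exp (C₃ * T) + M + 1, by positivity,
    s₀ + C₃ + 4 / T ^ 2 + 1, by
      have h4 : (0:ℝ) < 4 / T ^ 2 := by positivity
      linarith, ?_⟩
  set C : ℝ := B * C₃ * Real.exp (C₃ * T) + M + 1 with hC
  intro s hs z hz
  have hT2 : (0:ℝ) < 4 / T ^ 2 := by positivity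
  have hss₀ : s₀ < s := by linarith
  have hspos : 0 < s := by linarith
  have hs1 : (1:ℝ) ≤ s := by linarith
  have hsC₃ : C₃ + 1 ≤ s := by linarith
  have hsT4 : 4 / T ^ 2 ≤ s := by linarith
  have hbpos : 0 < s - C₃ := by linarith
  -- norm of z
  have hz' : ‖z‖ = s ^ (α / 2) := by
    have habs : |s ^ (α / 2)| = s ^ (α / 2) :=
      _root_.abs_of_nonneg (Real.rpow_nonneg hspos.le _)
    rcases hz with h | h <;> simp [h, habs]
  -- bound on the v-integral
  set A₁ : ℝ := |∫ t in Ioi (0 : ℝ), v t * Real.exp (-s * t)| with hA₁def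
  set A₂ : ℝ := |∫ t in Ioi (0 : ℝ), G t * Real.exp (-s * t)| with hA₂def
  have hvi : IntegrableOn (fun t => v t * Real.exp (-s * t)) (Ioi 0) := by
    refine Integrable.mono' ((exp_neg_integrableOn_Ioi 0 hbpos).const_mul C₃)
      ((hv_meas.mul (by fun_prop)).aestronglyMeasurable) ?_
    rw [ae_restrict_iff' measurableSet_Ioi]
    filter_upwards with t ht
    have h1 : |v t| ≤ C₃ * Real.exp (C₃ * t) := hv_bd t ht.le
    have h2 : Real.exp (C₃ * t) * Real.exp (-s * t) = Real.exp (-(s - C₃) * t) := by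
      rw [← Real.exp_add]; ring_nf
    calc ‖v t * Real.exp (-s * t)‖ = |v t| * Real.exp (-s * t) := by
          rw [Real.norm_eq_abs, abs_mul, abs_of_pos (Real.exp_pos _)]
      _ ≤ (C₃ * Real.exp (C₃ * t)) * Real.exp (-s * t) :=
          mul_le_mul_of_nonneg_right h1 (Real.exp_pos _).le
      _ = C₃ * Real.exp (-(s - C₃) * t) := by rw [mul_assoc, h2]
  have hA₁ : A₁ ≤ C₃ * Real.exp (-(s - C₃) * T) := by
    have hsplit : (∫ t in Ioi (0:ℝ), v t * Real.exp (-s * t)) =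
        (∫ t in Ioo (0:ℝ) T, v t * Real.exp (-s * t)) +
          ∫ t in Ici T, v t * Real.exp (-s * t) := by
      rw [← setIntegral_union ((Iio_disjoint_Ici le_rfl).mono_left Ioo_subset_Iio_self)
        measurableSet_Ici (hvi.mono_set Ioo_subset_Ioi_self)
        (hvi.mono_set (Ici_subset_Ioi.mpr hT)), Ioo_union_Ici_eq_Ioi hT]
    have h1 : (∫ t in Ioo (0:ℝ) T, v t * Real.exp (-s * t)) = 0 := by
      apply integral_eq_zero_of_ae
      filter_upwards [hv0] with t ht
      simp [ht]
    have h2 : |∫ t in Ici T, v t * Real.exp (-s * t)| ≤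
        C₃ * (Real.exp (-(s - C₃) * T) / (s - C₃)) := by
      have hbd : ‖∫ t in Ici T, v t * Real.exp (-s * t)‖ ≤
          ∫ t in Ici T, C₃ * Real.exp (-(s - C₃) * t) := by
        refine norm_integral_le_of_norm_le
          ((integrableOn_Ici_iff_integrableOn_Ioi (f := fun t => C₃ * Real.exp (-(s - C₃) * t))).mpr
            ((exp_neg_integrableOn_Ioi T hbpos).const_mul C₃)) ?_
        rw [ae_restrict_iff' measurableSet_Ici]
        filter_upwards with t ht
        have h1 : |v t| ≤ C₃ * Real.exp (C₃ * t) := hv_bd t (le_trans hT.le ht)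
        have h2 : Real.exp (C₃ * t) * Real.exp (-s * t) = Real.exp (-(s - C₃) * t) := by
          rw [← Real.exp_add]; ring_nf
        calc ‖v t * Real.exp (-s * t)‖ = |v t| * Real.exp (-s * t) := by
              rw [Real.norm_eq_abs, abs_mul, abs_of_pos (Real.exp_pos _)]
          _ ≤ (C₃ * Real.exp (C₃ * t)) * Real.exp (-s * t) :=
              mul_le_mul_of_nonneg_right h1 (Real.exp_pos _).le
          _ = C₃ * Real.exp (-(s - C₃) * t) := by rw [mul_assoc, h2]
      rw [Real.norm_eq_abs] at hbd
      calc |∫ t in Ici T, v t * Real.exp (-s * t)| ≤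
            ∫ t in Ici T, C₃ * Real.exp (-(s - C₃) * t) := hbd
        _ = C₃ * ∫ t in Ioi T, Real.exp (-(s - C₃) * t) := by
            rw [integral_Ici_eq_integral_Ioi, integral_const_mul]
        _ = C₃ * (Real.exp (-(s - C₃) * T) / (s - C₃)) := by
            rw [aux_exp_integral T hbpos]
    have hdiv : Real.exp (-(s - C₃) * T) / (s - C₃) ≤ Real.exp (-(s - C₃) * T) :=
      div_le_self (Real.exp_pos _).le (by linarith)
    calc A₁ = |(0:ℝ) + ∫ t in Ici T, v t * Real.exp (-s * t)| := by
          rw [hA₁def, hsplit, h1]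
      _ = |∫ t in Ici T, v t * Real.exp (-s * t)| := by rw [zero_add]
      _ ≤ C₃ * (Real.exp (-(s - C₃) * T) / (s - C₃)) := h2
      _ ≤ C₃ * Real.exp (-(s - C₃) * T) :=
          mul_le_mul_of_nonneg_left hdiv hC₃.le
  -- bound on the G-integral
  have hA₂ : A₂ ≤ M := by
    have hbd : ‖∫ t in Ioi (0:ℝ), G t * Real.exp (-s * t)‖ ≤
        ∫ t in Ioi (0:ℝ), M * Real.exp (-s * t) := by
      refine norm_integral_le_of_norm_le ((exp_neg_integrableOn_Ioi 0 hspos).const_mul M) ?_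
      rw [ae_restrict_iff' measurableSet_Ioi]
      filter_upwards with t ht
      calc ‖G t * Real.exp (-s * t)‖ = |G t| * Real.exp (-s * t) := by
            rw [Real.norm_eq_abs, abs_mul, abs_of_pos (Real.exp_pos _)]
        _ ≤ M * Real.exp (-s * t) :=
            mul_le_mul_of_nonneg_right (hG_bd t ht.le) (Real.exp_pos _).le
    rw [Real.norm_eq_abs] at hbd
    calc A₂ ≤ ∫ t in Ioi (0:ℝ), M * Real.exp (-s * t) := hbd
      _ = M * (Real.exp (-s * 0) / s) := by
          rw [integral_const_mul, aux_exp_integral 0 hspos]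
      _ = M / s := by norm_num [div_eq_mul_inv]
      _ ≤ M := div_le_self hM hs1
  -- the crucial exponential comparison: 2 s^(α/2) ≤ s * T for large s
  have hw : (0:ℝ) ≤ s ^ ((1:ℝ)/2) := Real.rpow_nonneg hspos.le _
  have husq : s ^ ((1:ℝ)/2) * s ^ ((1:ℝ)/2) = s := by
    rw [← Real.rpow_add hspos]; norm_num
  have h4 : (4:ℝ) ≤ (s ^ ((1:ℝ)/2) * T) ^ 2 := by
    have h := mul_le_mul_of_nonneg_right hsT4 (sq_nonneg T)
    rw [div_mul_cancel₀ _ (by positivity : (T:ℝ) ^ 2 ≠ 0)] at h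
    nlinarith [husq]
  have hroot : (2:ℝ) ≤ s ^ ((1:ℝ)/2) * T := by
    have hs4 : Real.sqrt 4 ≤ Real.sqrt ((s ^ ((1:ℝ)/2) * T) ^ 2) := Real.sqrt_le_sqrt h4
    rw [Real.sqrt_sq (by positivity)] at hs4
    have : Real.sqrt 4 = 2 := by
      rw [show (4:ℝ) = 2 ^ 2 by norm_num, Real.sqrt_sq (by norm_num)]
    linarith
  have hu2 : s ^ (α/2) ≤ s ^ ((1:ℝ)/2) :=
    Real.rpow_le_rpow_of_exponent_le hs1 (by linarith)
  have h2u : 2 * s ^ (α/2) ≤ s * T := by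
    nlinarith [mul_le_mul_of_nonneg_left hroot hw]
  -- bound the whole bracket
  have hu : s ^ (α/2) ≤ Real.exp (s ^ (α/2)) := by
    linarith [Real.add_one_le_exp (s ^ (α/2))]
  have hexp2 : Real.exp (s ^ (α/2)) * Real.exp (s ^ (α/2)) * Real.exp (-(s - C₃) * T) ≤
      Real.exp (C₃ * T) := by
    rw [← Real.exp_add, ← Real.exp_add]
    refine Real.exp_le_exp.mpr ?_
    have hr : -(s - C₃) * T = -(s * T) + C₃ * T := by ring
    linarith [h2u]
  have hterm1 : B * s ^ (α/2) * Real.exp (s ^ (α/2)) * A₁ ≤ B * C₃ * Real.exp (C₃ * T) := by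
    calc B * s ^ (α/2) * Real.exp (s ^ (α/2)) * A₁
        ≤ B * Real.exp (s ^ (α/2)) * Real.exp (s ^ (α/2)) *
            (C₃ * Real.exp (-(s - C₃) * T)) := by
          gcongr
      _ = B * C₃ * (Real.exp (s ^ (α/2)) * Real.exp (s ^ (α/2)) *
            Real.exp (-(s - C₃) * T)) := by ring
      _ ≤ B * C₃ * Real.exp (C₃ * T) :=
          mul_le_mul_of_nonneg_left hexp2 (by positivity)
  have hsum : B * s ^ (α/2) * Real.exp (s ^ (α/2)) * A₁ + A₂ ≤ C := by
    rw [hC]; linarith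
  -- exponent comparison
  have hexp_le : ((m:ℝ) - 1) * α + 1 ≤ α / 2 * N := by
    have hhalf := mul_le_mul_of_nonneg_left hN (by linarith : (0:ℝ) ≤ α / 2)
    have heq : α / 2 * (2 * (m:ℝ) - 1 + 2 / α) = (m:ℝ) * α - α / 2 + 1 := by
      field_simp
    rw [heq] at hhalf
    linarith [hhalf]
  have hpow : s ^ (((m:ℝ) - 1) * α + 1) ≤ s ^ (α / 2 * N) :=
    Real.rpow_le_rpow_of_exponent_le hs1 hexp_le
  have hzN : ‖z‖ ^ N = s ^ (α / 2 * N) := by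
    rw [hz', Real.rpow_mul hspos.le, Real.rpow_natCast]
  calc ‖F z‖ ≤ s ^ (((m:ℝ) - 1) * α + 1) *
        (B * s ^ (α/2) * Real.exp (s ^ (α/2)) * A₁ + A₂) := hF s hss₀ z hz
    _ ≤ s ^ (((m:ℝ) - 1) * α + 1) * C :=
        mul_le_mul_of_nonneg_left hsum (Real.rpow_nonneg hspos.le _)
    _ ≤ s ^ (α / 2 * N) * C := by
        have hC0 : (0:ℝ) ≤ C := by rw [hC]; positivity
        exact mul_le_mul_of_nonneg_right hpow hC0
    _ = C * ‖z‖ ^ N := by rw [hzN]; ring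
end

section
/- Let F : ℂ → ℂ be entire, and suppose there exist constants C > 0, A > 0, M > 0 and a natural number N such that: (i) |F(z)| ≤ C·exp(A·|Im z|) for all z ∈ ℂ; (ii) |F(z)| ≤ C·|z|^N for all purely imaginary z with |z| ≥ M; (iii) |F(z)| ≤ C for all real z. Then F is a polynomial function of degree at most N. -/
set_option maxHeartbeats 1000000

open Complex Set Filter Asymptotics Bornology

namespace Stmt5Aux

lemma aux_bound (F : ℂ → ℂ) (w z : ℂ) (N : ℕ) {C₁ D : ℝ} (hC₁ : 0 ≤ C₁)
    (hD1 : 0 < D) (hD : D ≤ ‖z - w‖)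
    (hg : ‖F z‖ ≤ C₁ * D ^ N) : ‖((z - w) ^ N)⁻¹ * F z‖ ≤ C₁ := by
  have hzw : (0:ℝ) < ‖z - w‖ := by exact hD1.trans_le hD
  rw [norm_mul, norm_inv, norm_pow, inv_mul_le_iff₀ (pow_pos hzw N)]
  calc ‖F z‖ ≤ C₁ * D ^ N := hg
    _ ≤ C₁ * ‖z - w‖ ^ N := by gcongr
    _ = ‖z - w‖ ^ N * C₁ := mul_comm _ _

lemma aux_conc (F : ℂ → ℂ) (w z : ℂ) (N : ℕ) {C₁ : ℝ} (hC₁ : 0 ≤ C₁)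
    (hw : ‖w‖ ≤ 2) (hzw : z ≠ w)
    (h : ‖((z - w) ^ N)⁻¹ * F z‖ ≤ C₁) : ‖F z‖ ≤ C₁ * (‖z‖ + 2) ^ N := by
  have hne : (z - w) ^ N ≠ 0 := pow_ne_zero _ (sub_ne_zero.2 hzw)
  have : F z = (z - w) ^ N * (((z - w) ^ N)⁻¹ * F z) := by
    field_simp
  rw [this, norm_mul]
  have h1 : ‖(z - w) ^ N‖ ≤ (‖z‖ + 2) ^ N := by
    rw [norm_pow]
    gcongr
    calc ‖z - w‖ ≤ ‖z‖ + ‖w‖ := by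
          exact norm_sub_le z w
      _ ≤ ‖z‖ + 2 := by linarith
  calc ‖(z - w) ^ N‖ * ‖((z - w) ^ N)⁻¹ * F z‖ ≤ (‖z‖ + 2) ^ N * C₁ := by
        exact mul_le_mul h1 h (norm_nonneg _) (by positivity)
    _ = C₁ * (‖z‖ + 2) ^ N := mul_comm _ _

lemma aux_diff (F : ℂ → ℂ) (hF : Differentiable ℂ F) (w : ℂ) (N : ℕ) {u : ℂ} (hu : u ≠ w) :
    DifferentiableAt ℂ (fun z => ((z - w) ^ N)⁻¹ * F z) u := by
  have h1 : DifferentiableAt ℂ (fun z : ℂ => ((z - w) ^ N)⁻¹) u :=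
    (((differentiableAt_id.sub (differentiableAt_const w)).pow N).inv
      (pow_ne_zero N (sub_ne_zero.2 hu)))
  exact h1.mul (hF.differentiableAt)

lemma aux_hB (F : ℂ → ℂ) (w : ℂ) (N : ℕ) {C₁ A : ℝ} (hC₁ : 0 ≤ C₁) (hA : 0 ≤ A) (S : Set ℂ)
    (hS : ∀ z ∈ S, (1:ℝ) ≤ ‖z - w‖)
    (hexp : ∀ z : ℂ, ‖F z‖ ≤ C₁ * Real.exp (A * ‖z‖)) :
    ∃ c < (2:ℝ), ∃ B, (fun z => ((z - w) ^ N)⁻¹ * F z) =O[cobounded ℂ ⊓ 𝓟 S]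
      fun z => Real.exp (B * ‖z‖ ^ c) := by
  refine ⟨1, by norm_num, A, IsBigO.of_bound C₁ ?_⟩
  rw [eventually_inf_principal]
  filter_upwards with z hz
  have h := aux_bound F w z N (C₁ := C₁ * Real.exp (A * ‖z‖)) (D := 1)
    (by positivity) one_pos (hS z hz) (by simpa using hexp z)
  calc ‖((z - w) ^ N)⁻¹ * F z‖ ≤ C₁ * Real.exp (A * ‖z‖) := h
    _ = C₁ * ‖Real.exp (A * ‖z‖ ^ (1:ℝ))‖ := by
        rw [Real.rpow_one, Real.norm_of_nonneg (Real.exp_pos _).le]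

/-- Phragmén–Lindelöf bound on the closed upper half-plane. -/
lemma aux_upper (F : ℂ → ℂ) (hF : Differentiable ℂ F) (C₁ A : ℝ) (hC₁ : 0 < C₁) (hA : 0 < A)
    (N : ℕ)
    (hexp : ∀ z : ℂ, ‖F z‖ ≤ C₁ * Real.exp (A * ‖z‖))
    (hre : ∀ x : ℝ, ‖F (x : ℂ)‖ ≤ C₁)
    (him : ∀ x : ℝ, ‖F (x * I)‖ ≤ C₁ * (|x| + 1) ^ N) :
    ∀ z : ℂ, 0 ≤ z.im → ‖F z‖ ≤ C₁ * (‖z‖ + 2) ^ N := by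
  intro z hzim
  rcases le_or_gt 0 z.re with hzre | hzre
  · -- first quadrant, w = -1 - I
    set w : ℂ := -1 - I with hw
    have hwre : w.re = -1 := by simp [hw]
    have hwim : w.im = -1 := by simp [hw]
    have hwabs : ‖w‖ ≤ 2 := by
      calc ‖w‖ ≤ ‖(-1 : ℂ)‖ + ‖-I‖ := by
            simpa [hw, sub_eq_add_neg] using norm_add_le (-1 : ℂ) (-I)
        _ ≤ 2 := by norm_num
    have f1 : ∀ u : ℂ, 0 ≤ u.re → (1:ℝ) ≤ ‖u - w‖ := by
      intro u hu
      calc (1:ℝ) ≤ |(u - w).re| := by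
            rw [Complex.sub_re, hwre, _root_.abs_of_nonneg (by linarith)]; linarith
        _ ≤ ‖u - w‖ := Complex.abs_re_le_norm _
    have f2 : ∀ x : ℝ, 0 ≤ x → (|x| + 1 : ℝ) ≤ ‖(x : ℂ) * I - w‖ := by
      intro x hx
      calc (|x| + 1 : ℝ) = |((x : ℂ) * I - w).im| := by
            rw [Complex.sub_im, Complex.mul_I_im, hwim, Complex.ofReal_re,
              _root_.abs_of_nonneg hx, _root_.abs_of_nonneg (by linarith : (0:ℝ) ≤ x - -1)]
            ring
        _ ≤ ‖(x : ℂ) * I - w‖ := Complex.abs_im_le_norm _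
    have hzw : z ≠ w := fun h => by rw [h, hwre] at hzre; norm_num at hzre
    have hquad : ‖(fun v : ℂ => ((v - w) ^ N)⁻¹ * F v) z‖ ≤ C₁ := by
      refine PhragmenLindelof.quadrant_I (f := fun v : ℂ => ((v - w) ^ N)⁻¹ * F v)
        ?_ ?_ ?_ ?_ hzre hzim
      · refine DifferentiableOn.diffContOnCl fun u hu => ?_
        rw [closure_reProdIm, closure_Ioi, mem_reProdIm] at hu
        refine (aux_diff F hF w N fun h => ?_).differentiableWithinAt
        rw [h, hwre] at hu
        exact absurd hu.1 (by norm_num)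
      · refine aux_hB F w N hC₁.le hA.le _ (fun u hu => ?_) hexp
        rw [mem_reProdIm] at hu
        exact f1 u (le_of_lt hu.1)
      · intro x hx
        exact aux_bound F w x N hC₁.le one_pos (f1 x (by simpa using hx))
          (by simpa using hre x)
      · intro x hx
        exact aux_bound F w _ N hC₁.le (by positivity) (f2 x hx) (him x)
    exact aux_conc F w z N hC₁.le hwabs hzw hquad
  · -- second quadrant, w = 1 - I
    set w : ℂ := 1 - I with hw
    have hwre : w.re = 1 := by simp [hw]
    have hwim : w.im = -1 := by simp [hw]
    have hwabs : ‖w‖ ≤ 2 := by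
      calc ‖w‖ ≤ ‖(1 : ℂ)‖ + ‖-I‖ := by
            simpa [hw, sub_eq_add_neg] using norm_add_le (1 : ℂ) (-I)
        _ ≤ 2 := by norm_num
    have f1 : ∀ u : ℂ, u.re ≤ 0 → (1:ℝ) ≤ ‖u - w‖ := by
      intro u hu
      calc (1:ℝ) ≤ |(u - w).re| := by
            rw [Complex.sub_re, hwre, _root_.abs_of_nonpos (by linarith)]; linarith
        _ ≤ ‖u - w‖ := Complex.abs_re_le_norm _
    have f2 : ∀ x : ℝ, 0 ≤ x → (|x| + 1 : ℝ) ≤ ‖(x : ℂ) * I - w‖ := by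
      intro x hx
      calc (|x| + 1 : ℝ) = |((x : ℂ) * I - w).im| := by
            rw [Complex.sub_im, Complex.mul_I_im, hwim, Complex.ofReal_re,
              _root_.abs_of_nonneg hx, _root_.abs_of_nonneg (by linarith : (0:ℝ) ≤ x - -1)]
            ring
        _ ≤ ‖(x : ℂ) * I - w‖ := Complex.abs_im_le_norm _
    have hzw : z ≠ w := fun h => by rw [h, hwre] at hzre; norm_num at hzre
    have hquad : ‖(fun v : ℂ => ((v - w) ^ N)⁻¹ * F v) z‖ ≤ C₁ := by
      refine PhragmenLindelof.quadrant_II (f := fun v : ℂ => ((v - w) ^ N)⁻¹ * F v)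
        ?_ ?_ ?_ ?_ hzre.le hzim
      · refine DifferentiableOn.diffContOnCl fun u hu => ?_
        rw [closure_reProdIm, closure_Iio, closure_Ioi, mem_reProdIm] at hu
        refine (aux_diff F hF w N fun h => ?_).differentiableWithinAt
        rw [h, hwre] at hu
        have := hu.1
        norm_num at this
      · refine aux_hB F w N hC₁.le hA.le _ (fun u hu => ?_) hexp
        rw [mem_reProdIm] at hu
        exact f1 u (le_of_lt hu.1)
      · intro x hx
        exact aux_bound F w x N hC₁.le one_pos (f1 x (by simpa using hx))
          (by simpa using hre x)
      · intro x hx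
        exact aux_bound F w _ N hC₁.le (by positivity) (f2 x hx) (him x)
    exact aux_conc F w z N hC₁.le hwabs hzw hquad

/-- Generalized Liouville: entire + polynomial growth implies polynomial. -/
lemma aux_liouville (F : ℂ → ℂ) (hF : Differentiable ℂ F) (C₁ : ℝ) (hC₁ : 0 < C₁) (N : ℕ)
    (key : ∀ z : ℂ, ‖F z‖ ≤ C₁ * (‖z‖ + 2) ^ N) :
    ∃ P : Polynomial ℂ, P.degree ≤ N ∧ ∀ z : ℂ, F z = P.eval z := by
  classical
  set p : FormalMultilinearSeries ℂ ℂ ℂ := cauchyPowerSeries F 0 ((1:NNReal):ℝ) with hpdef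
  have hball : HasFPowerSeriesOnBall F p 0 ⊤ := hF.hasFPowerSeriesOnBall 0 one_pos
  have hcoeff_norm : ∀ n : ℕ, ∀ q : FormalMultilinearSeries ℂ ℂ ℂ, ‖q.coeff n‖ ≤ ‖q n‖ := by
    intro n q
    calc ‖q.coeff n‖ ≤ ‖q n‖ * ∏ _i : Fin n, ‖(1 : ℂ)‖ := (q n).le_opNorm _
      _ = ‖q n‖ := by simp
  have hcb : ∀ (n : ℕ) (R : ℝ), 1 ≤ R → ‖p.coeff n‖ ≤ C₁ * (R + 2) ^ N / R ^ n := by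
    intro n R hR
    have hR0 : (0:ℝ) < R := one_pos.trans_le hR
    have hRlift : (0 : NNReal) < R.toNNReal := by simpa using hR0
    have hball' := hF.hasFPowerSeriesOnBall 0 hRlift
    rw [Real.coe_toNNReal _ hR0.le] at hball'
    have hpR : cauchyPowerSeries F 0 R = p :=
      hball'.hasFPowerSeriesAt.eq_formalMultilinearSeries hball.hasFPowerSeriesAt
    have hint : ∫ θ : ℝ in (0)..2 * Real.pi, ‖F (circleMap 0 R θ)‖ ≤
        2 * Real.pi * (C₁ * (R + 2) ^ N) := by
      have hcont : Continuous fun θ : ℝ => ‖F (circleMap 0 R θ)‖ :=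
        (hF.continuous.comp (continuous_circleMap 0 _)).norm
      calc ∫ θ : ℝ in (0)..2 * Real.pi, ‖F (circleMap 0 R θ)‖
          ≤ ∫ _θ : ℝ in (0)..2 * Real.pi, C₁ * (R + 2) ^ N := by
            refine intervalIntegral.integral_mono_on Real.two_pi_pos.le
              (hcont.intervalIntegrable _ _) intervalIntegrable_const fun θ _ => ?_
            have h := key (circleMap 0 R θ)
            rwa [show ‖circleMap 0 R θ‖ = R by
              rw [norm_circleMap_zero, _root_.abs_of_nonneg hR0.le]] at h
        _ = 2 * Real.pi * (C₁ * (R + 2) ^ N) := by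
            rw [intervalIntegral.integral_const, smul_eq_mul]
            ring
    have hb := norm_cauchyPowerSeries_le F 0 R n
    calc ‖p.coeff n‖ ≤ ‖p n‖ := hcoeff_norm n p
      _ = ‖cauchyPowerSeries F 0 R n‖ := by rw [hpR]
      _ ≤ ((2 * Real.pi)⁻¹ * ∫ θ : ℝ in (0)..2 * Real.pi, ‖F (circleMap 0 R θ)‖) *
            |R|⁻¹ ^ n := hb
      _ ≤ ((2 * Real.pi)⁻¹ * (2 * Real.pi * (C₁ * (R + 2) ^ N))) * |R|⁻¹ ^ n := by
          gcongr
      _ = C₁ * (R + 2) ^ N / R ^ n := by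
          rw [_root_.abs_of_nonneg hR0.le, inv_mul_cancel_left₀ Real.two_pi_pos.ne',
            div_eq_mul_inv, inv_pow]
  have hvanish : ∀ n : ℕ, N < n → p.coeff n = 0 := by
    intro n hn
    have hle : ∀ R : ℝ, 1 ≤ R → ‖p.coeff n‖ ≤ C₁ * 3 ^ N / R := by
      intro R hR
      have hR0 : (0:ℝ) < R := one_pos.trans_le hR
      calc ‖p.coeff n‖ ≤ C₁ * (R + 2) ^ N / R ^ n := hcb n R hR
        _ ≤ C₁ * (3 * R) ^ N / R ^ (N + 1) := by
            gcongr <;> first | positivity | omega | linarith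
        _ = C₁ * 3 ^ N / R := by
            rw [mul_pow, pow_succ]
            field_simp
    have hnn : ‖p.coeff n‖ ≤ 0 := by
      by_contra h
      push_neg at h
      set ε := ‖p.coeff n‖ with hε
      have hε0 : 0 < ε := h
      set R : ℝ := max 1 (2 * (C₁ * 3 ^ N) / ε) with hRdef
      have hR1 : (1:ℝ) ≤ R := le_max_left _ _
      have hb := hle R hR1
      have hRge : 2 * (C₁ * 3 ^ N) / ε ≤ R := le_max_right _ _
      have hRpos : (0:ℝ) < R := one_pos.trans_le hR1
      have hC3 : (0:ℝ) < C₁ * 3 ^ N := by positivity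
      have h2 : ε * (2 * (C₁ * 3 ^ N) / ε) ≤ ε * R := by gcongr
      have h3 : ε * R ≤ C₁ * 3 ^ N := (le_div_iff₀ hRpos).1 hb
      rw [mul_div_assoc, mul_comm ε, mul_assoc, div_mul_cancel₀ _ hε0.ne'] at h2
      nlinarith
    exact norm_le_zero_iff.1 hnn
  refine ⟨∑ n ∈ Finset.range (N + 1), Polynomial.C (p.coeff n) * Polynomial.X ^ n, ?_, ?_⟩
  · refine (Polynomial.degree_sum_le _ _).trans ?_
    refine Finset.sup_le fun n hn => ?_
    refine (Polynomial.degree_C_mul_X_pow_le _ _).trans ?_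
    exact_mod_cast Nat.lt_succ_iff.1 (Finset.mem_range.1 hn)
  · intro z
    have hz : z ∈ EMetric.ball (0 : ℂ) ⊤ := EMetric.mem_ball.2 (edist_lt_top _ _)
    have hsum := hball.hasSum (y := z) hz
    simp only [zero_add] at hsum
    have hzero : ∀ n ∉ Finset.range (N + 1), (p n fun _ => z) = 0 := by
      intro n hn
      have hNn : N < n := by
        by_contra h
        exact hn (Finset.mem_range.2 (by omega))
      rw [FormalMultilinearSeries.apply_eq_pow_smul_coeff, hvanish n hNn, smul_zero]
    have hsum' := hasSum_sum_of_ne_finset_zero (L := SummationFilter.unconditional ℕ) hzero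
    have hFz := hsum.unique hsum'
    rw [hFz, Polynomial.eval_finset_sum]
    refine Finset.sum_congr rfl fun n _ => ?_
    rw [FormalMultilinearSeries.apply_eq_pow_smul_coeff, Polynomial.eval_mul,
      Polynomial.eval_C, Polynomial.eval_pow, Polynomial.eval_X, smul_eq_mul, mul_comm]

end Stmt5Aux

open Stmt5Aux in
/-- Lemma 3.5: an entire function of exponential type in the imaginary
direction, polynomially bounded on the imaginary axis and bounded on the real
axis, is a polynomial of degree at most `N`. -/
theorem stmt_5 (F : ℂ → ℂ) (hF : Differentiable ℂ F)
    (C A M : ℝ) (hC : 0 < C) (hA : 0 < A) (hM : 0 < M) (N : ℕ)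
    (h1 : ∀ z : ℂ, ‖F z‖ ≤ C * Real.exp (A * |z.im|))
    (h2 : ∀ z : ℂ, z.re = 0 → M ≤ ‖z‖ → ‖F z‖ ≤ C * ‖z‖ ^ N)
    (h3 : ∀ x : ℝ, ‖F (x : ℂ)‖ ≤ C) :
    ∃ P : Polynomial ℂ, P.degree ≤ N ∧ ∀ z : ℂ, F z = P.eval z := by
  classical
  set C₁ : ℝ := C * Real.exp (A * M) with hC₁def
  have hC₁ : 0 < C₁ := by positivity
  have hexpAM : (1:ℝ) ≤ Real.exp (A * M) := by
    rw [← Real.exp_zero]; exact Real.exp_le_exp.2 (by positivity)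
  have hCC₁ : C ≤ C₁ := by
    calc C = C * 1 := (mul_one C).symm
      _ ≤ C * Real.exp (A * M) := mul_le_mul_of_nonneg_left hexpAM hC.le
  -- Transfer hypotheses to the form of `aux_upper`.
  have hexp : ∀ z : ℂ, ‖F z‖ ≤ C₁ * Real.exp (A * ‖z‖) := by
    intro z
    calc ‖F z‖ ≤ C * Real.exp (A * |z.im|) := h1 z
      _ ≤ C₁ * Real.exp (A * ‖z‖) :=
          mul_le_mul hCC₁ (Real.exp_le_exp.2
            (mul_le_mul_of_nonneg_left (Complex.abs_im_le_norm z) hA.le))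
            (Real.exp_pos _).le hC₁.le
  have hre : ∀ x : ℝ, ‖F (x : ℂ)‖ ≤ C₁ := fun x => (h3 x).trans hCC₁
  have him : ∀ x : ℝ, ‖F ((x : ℂ) * I)‖ ≤ C₁ * (|x| + 1) ^ N := by
    intro x
    have hnorm : ‖(x : ℂ) * I‖ = |x| := by
      simp
    rcases le_or_gt M (|x|) with hx | hx
    · calc ‖F ((x : ℂ) * I)‖ ≤ C * ‖(x : ℂ) * I‖ ^ N := h2 _ (by simp) (by rwa [hnorm])
        _ = C * |x| ^ N := by rw [hnorm]
        _ ≤ C₁ * (|x| + 1) ^ N :=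
            mul_le_mul hCC₁ (pow_le_pow_left₀ (abs_nonneg x) (by linarith) N)
              (by positivity) hC₁.le
    · calc ‖F ((x : ℂ) * I)‖ ≤ C * Real.exp (A * |((x:ℂ) * I).im|) := h1 _
        _ ≤ C * Real.exp (A * M) := by
            refine mul_le_mul_of_nonneg_left (Real.exp_le_exp.2
              (mul_le_mul_of_nonneg_left ?_ hA.le)) hC.le
            simp only [Complex.mul_I_im, Complex.ofReal_re]
            exact hx.le
        _ = C₁ * 1 := by rw [mul_one]
        _ ≤ C₁ * (|x| + 1) ^ N :=
            mul_le_mul_of_nonneg_left (one_le_pow₀ (by linarith [abs_nonneg x])) hC₁.le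
  -- global polynomial bound
  have key : ∀ z : ℂ, ‖F z‖ ≤ C₁ * (‖z‖ + 2) ^ N := by
    intro z
    rcases le_or_gt 0 z.im with hz | hz
    · exact aux_upper F hF C₁ A hC₁ hA N hexp hre him z hz
    · have hG : Differentiable ℂ fun u : ℂ => F (-u) := hF.comp differentiable_neg
      have := aux_upper (fun u => F (-u)) hG C₁ A hC₁ hA N
        (fun u => by simpa using hexp (-u))
        (fun x => by
          have h := hre (-x)
          rw [show (((-x : ℝ)) : ℂ) = -(x:ℂ) by push_cast; ring] at h
          exact h)
        (fun x => by
          have h := him (-x)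
          rw [show (((-x : ℝ)) : ℂ) * I = -((x:ℂ) * I) by push_cast; ring, abs_neg] at h
          exact h)
        (-z) (by simp [hz.le])
      simpa using this
  exact aux_liouville F hF C₁ hC₁ N key
end

section
/- Let F : ℂ → ℂ be entire, and suppose there exist constants C > 0, A > 0, M > 0 and a natural number N such that: (i) |F(z)| ≤ C·exp(A·|Im z|) for all z ∈ ℂ; (ii) |F(z)| ≤ C·|z|^N for all purely imaginary z with |z| ≥ M; (iii) |F(z)| ≤ C for all real z. If in addition F(x) → 0 as x → +∞ along the real axis, then F(z) = 0 for all z ∈ ℂ. -/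
open Filter Complex Set


lemma poly_liouville : ∀ (N : ℕ) (G : ℂ → ℂ), Differentiable ℂ G →
    ∀ D : ℝ, (∀ z : ℂ, ‖G z‖ ≤ D * (1 + ‖z‖) ^ N) →
    Tendsto (fun x : ℝ => G (x : ℂ)) atTop (nhds 0) → ∀ z : ℂ, G z = 0 := by
  intro N
  induction N with
  | zero =>
    intro G hG D hD hlim z
    have hb : Bornology.IsBounded (Set.range G) := by
      rw [Metric.isBounded_iff_subset_closedBall 0]
      exact ⟨D, by rintro _ ⟨w, rfl⟩; simpa [Metric.mem_closedBall] using hD w⟩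
    have hconst : ∀ x : ℝ, G (x : ℂ) = G z := fun x => hG.apply_eq_apply_of_bounded hb _ _
    have : Tendsto (fun _ : ℝ => G z) atTop (nhds 0) := hlim.congr (fun x => hconst x)
    exact tendsto_nhds_unique tendsto_const_nhds this
  | succ N ih =>
    intro G hG D hD hlim
    set H : ℂ → ℂ := dslope G 0 with hHdef
    have hH : Differentiable ℂ H := by
      rw [← differentiableOn_univ] at hG ⊢
      exact (Complex.differentiableOn_dslope (by simp)).mpr hG
    -- bound on the unit ball
    obtain ⟨c, hc⟩ := (isCompact_closedBall (0:ℂ) 1).exists_bound_of_continuousOn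
      hH.continuous.continuousOn
    have hc0 : 0 ≤ c := le_trans (norm_nonneg _) (hc 0 (by simp))
    set D₀ : ℝ := max D 0 with hD₀
    have hD0 : ∀ z : ℂ, ‖G z‖ ≤ D₀ * (1 + ‖z‖) ^ (N+1) := fun z =>
      (hD z).trans (by gcongr; exact le_max_left _ _)
    set D' : ℝ := max c (4 * D₀) with hD'
    have hHbound : ∀ z : ℂ, ‖H z‖ ≤ D' * (1 + ‖z‖) ^ N := by
      intro z
      have hpow1 : (1:ℝ) ≤ (1 + ‖z‖) ^ N := one_le_pow₀ (by linarith [norm_nonneg z])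
      rcases le_or_gt ‖z‖ 1 with h | h
      · calc ‖H z‖ ≤ c := hc z (by simpa using h)
          _ ≤ D' := le_max_left _ _
          _ ≤ D' * (1 + ‖z‖) ^ N := le_mul_of_one_le_right (hc0.trans (le_max_left _ _)) hpow1
      · have hz : z ≠ 0 := by intro h0; rw [h0] at h; norm_num at h
        have hHz : H z = z⁻¹ * (G z - G 0) := by
          rw [hHdef, dslope_of_ne _ hz, slope_def_field]
          field_simp
          ring
        have h1z : (0:ℝ) < ‖z‖ := by positivity
        have : ‖H z‖ = ‖G z - G 0‖ / ‖z‖ := by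
          rw [hHz]; rw [norm_mul, norm_inv]; ring
        rw [this]
        have hD₀0 : (0:ℝ) ≤ D₀ := le_max_right _ _
        have hpow' : (1:ℝ) ≤ (1 + ‖z‖) ^ (N+1) := one_le_pow₀ (by linarith [norm_nonneg z])
        have hG0b : ‖G 0‖ ≤ D₀ := by simpa using hD0 0
        have hnum : ‖G z - G 0‖ ≤ 2 * D₀ * (1 + ‖z‖) ^ (N+1) := by
          have h4 : D₀ ≤ D₀ * (1 + ‖z‖) ^ (N+1) := le_mul_of_one_le_right hD₀0 hpow'
          have h5 := norm_sub_le (G z) (G 0)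
          have h6 := hD0 z
          linarith
        have hkey : (1 + ‖z‖) ^ (N+1) ≤ 2 * ‖z‖ * (1 + ‖z‖) ^ N := by
          rw [pow_succ]
          calc (1 + ‖z‖) ^ N * (1 + ‖z‖) ≤ (1 + ‖z‖) ^ N * (2 * ‖z‖) := by
                gcongr; linarith
            _ = 2 * ‖z‖ * (1 + ‖z‖) ^ N := by ring
        rw [div_le_iff₀ h1z]
        calc ‖G z - G 0‖ ≤ 2 * D₀ * (1 + ‖z‖) ^ (N+1) := hnum
          _ ≤ 2 * D₀ * (2 * ‖z‖ * (1 + ‖z‖) ^ N) :=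
              mul_le_mul_of_nonneg_left hkey (by linarith)
          _ = 4 * D₀ * (1 + ‖z‖) ^ N * ‖z‖ := by ring
          _ ≤ D' * (1 + ‖z‖) ^ N * ‖z‖ := by gcongr; exact le_max_right _ _
    have hHlim : Tendsto (fun x : ℝ => H (x : ℂ)) atTop (nhds 0) := by
      have t1 : Tendsto (fun x : ℝ => ((x : ℂ))⁻¹) atTop (nhds 0) := by
        have h := (Complex.continuous_ofReal.tendsto 0).comp tendsto_inv_atTop_zero
        have he : (fun x : ℝ => ((x:ℂ))⁻¹) = Complex.ofReal ∘ fun r : ℝ => r⁻¹ := by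
          funext x; simp [Function.comp, Complex.ofReal_inv]
        rw [he]; simpa using h
      have t2 : Tendsto (fun x : ℝ => G (x:ℂ) - G 0) atTop (nhds (0 - G 0)) :=
        hlim.sub tendsto_const_nhds
      have t3 := t1.mul t2
      rw [zero_mul] at t3
      apply t3.congr'
      filter_upwards [eventually_ge_atTop (1:ℝ)] with x hx
      have hx0 : (x:ℂ) ≠ 0 := by
        simp only [ne_eq, Complex.ofReal_eq_zero]; linarith
      rw [hHdef, dslope_of_ne _ hx0, slope_def_field]
      field_simp
      ring
    have hH0 : ∀ z : ℂ, H z = 0 := ih H hH D' hHbound hHlim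
    have hGconst : ∀ z : ℂ, G z = G 0 := by
      intro z
      have := sub_smul_dslope G 0 z
      have h2 := hH0 z
      rw [hHdef] at h2
      rw [h2] at this
      simp only [smul_zero] at this
      linear_combination -this
    have hG0 : G 0 = 0 := by
      have : Tendsto (fun _ : ℝ => G 0) atTop (nhds 0) := hlim.congr (fun x => (hGconst x))
      exact tendsto_nhds_unique tendsto_const_nhds this
    intro z; rw [hGconst z, hG0]

lemma quad_bound (f : ℂ → ℂ) (hf : Differentiable ℂ f) (A C₀ C₁ : ℝ) (hC₁ : 0 ≤ C₁) (N : ℕ)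
    (hgrow : ∀ z : ℂ, ‖f z‖ ≤ C₀ * Real.exp (A * ‖z‖))
    (hre : ∀ x : ℝ, 0 ≤ x → ‖f (x : ℂ)‖ ≤ C₁ * max 1 x ^ N)
    (him : ∀ x : ℝ, 0 ≤ x → ‖f ((x : ℂ) * I)‖ ≤ C₁ * max 1 x ^ N) :
    ∀ z : ℂ, 0 ≤ z.re → 0 ≤ z.im → ‖f z‖ ≤ C₁ * (‖z‖ + 2) ^ N := by
  set g : ℂ → ℂ := fun w => f w / (w + 1 + I) ^ N with hgdef
  -- the divisor is large
  have hdiv1 : ∀ w : ℂ, 0 ≤ w.re → (1 : ℝ) ≤ ‖w + 1 + I‖ := by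
    intro w hw
    have : (w + 1 + I).re = w.re + 1 := by simp
    calc (1:ℝ) ≤ (w + 1 + I).re := by rw [this]; linarith
      _ ≤ ‖w + 1 + I‖ := by
          exact Complex.re_le_norm _
  have hne : ∀ w : ℂ, 0 ≤ w.re → (w + 1 + I) ^ N ≠ 0 := by
    intro w hw
    apply pow_ne_zero
    intro h0
    have := hdiv1 w hw
    rw [h0] at this; simp at this; linarith
  have hgdiff : ∀ w : ℂ, 0 ≤ w.re → DifferentiableAt ℂ g w := by
    intro w hw
    exact (hf w).div (((differentiableAt_id.add_const _).add_const _).pow N) (hne w hw)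
  have hclos : closure (Ioi (0:ℝ) ×ℂ Ioi (0:ℝ)) ⊆ {w : ℂ | 0 ≤ w.re} := by
    rw [Complex.closure_reProdIm, closure_Ioi]
    intro w hw
    exact hw.1
  have hd : DiffContOnCl ℂ g (Ioi 0 ×ℂ Ioi 0) := by
    constructor
    · intro w hw
      exact (hgdiff w (le_of_lt hw.1)).differentiableWithinAt
    · intro w hw
      exact ((hgdiff w (hclos hw)).continuousAt).continuousWithinAt
  have hgle : ∀ w : ℂ, 0 ≤ w.re → ‖g w‖ ≤ ‖f w‖ := by
    intro w hw
    rw [hgdef]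
    simp only [norm_div, norm_pow]
    have h1 : (1:ℝ) ≤ ‖w + 1 + I‖ ^ N := one_le_pow₀ (hdiv1 w hw)
    calc ‖f w‖ / ‖w + 1 + I‖ ^ N ≤ ‖f w‖ / 1 := by
          apply div_le_div_of_nonneg_left (norm_nonneg _) one_pos h1
      _ = ‖f w‖ := div_one _
  -- growth condition for Phragmen-Lindelof
  have hB : ∃ c < (2:ℝ), ∃ B, g =O[Bornology.cobounded ℂ ⊓ 𝓟 (Ioi 0 ×ℂ Ioi 0)]
      fun w => Real.exp (B * ‖w‖ ^ c) := by
    refine ⟨1, one_lt_two, A, ?_⟩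
    rw [Asymptotics.isBigO_iff]
    refine ⟨C₀, ?_⟩
    rw [eventually_inf_principal]
    apply Eventually.of_forall
    intro w hw
    have hw' : 0 ≤ w.re := le_of_lt hw.1
    have : ‖g w‖ ≤ C₀ * Real.exp (A * ‖w‖) := (hgle w hw').trans (hgrow w)
    calc ‖g w‖ ≤ C₀ * Real.exp (A * ‖w‖) := this
      _ ≤ C₀ * ‖Real.exp (A * ‖w‖ ^ (1:ℝ))‖ := by
          rw [Real.rpow_one, Real.norm_eq_abs, abs_of_pos (Real.exp_pos _)]
  -- boundary estimates for g
  have hbd : ∀ (w : ℂ) (x : ℝ), 0 ≤ x → max 1 x ≤ ‖w + 1 + I‖ →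
      ‖f w‖ ≤ C₁ * max 1 x ^ N → ‖g w‖ ≤ C₁ := by
    intro w x hx hw hfw
    have h1 : (0:ℝ) < max 1 x := lt_of_lt_of_le one_pos (le_max_left _ _)
    have h2 : (0:ℝ) < ‖w + 1 + I‖ ^ N := pow_pos (lt_of_lt_of_le h1 hw) N
    rw [hgdef]
    simp only [norm_div, norm_pow]
    rw [div_le_iff₀ h2]
    calc ‖f w‖ ≤ C₁ * max 1 x ^ N := hfw
      _ ≤ C₁ * ‖w + 1 + I‖ ^ N := by gcongr
  have hre' : ∀ x : ℝ, 0 ≤ x → ‖g (x : ℂ)‖ ≤ C₁ := by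
    intro x hx
    apply hbd _ x hx _ (hre x hx)
    have : ((x:ℂ) + 1 + I).re = x + 1 := by simp
    calc max 1 x ≤ x + 1 := by rcases max_cases 1 x with ⟨h,_⟩|⟨h,_⟩ <;> rw [h] <;> linarith
      _ = ((x:ℂ) + 1 + I).re := this.symm
      _ ≤ ‖(x:ℂ) + 1 + I‖ := by exact Complex.re_le_norm _
  have him' : ∀ x : ℝ, 0 ≤ x → ‖g ((x : ℂ) * I)‖ ≤ C₁ := by
    intro x hx
    apply hbd _ x hx _ (him x hx)
    have h1 : ((x:ℂ) * I + 1 + I).im = x + 1 := by simp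
    calc max 1 x ≤ x + 1 := by rcases max_cases 1 x with ⟨h,_⟩|⟨h,_⟩ <;> rw [h] <;> linarith
      _ = ((x:ℂ) * I + 1 + I).im := h1.symm
      _ ≤ |((x:ℂ) * I + 1 + I).im| := le_abs_self _
      _ ≤ ‖(x:ℂ) * I + 1 + I‖ := by exact Complex.abs_im_le_norm _
  intro z hzre hzim
  have hq : ‖g z‖ ≤ C₁ := PhragmenLindelof.quadrant_I hd hB hre' him' hzre hzim
  have hfz : f z = g z * (z + 1 + I) ^ N := by
    rw [hgdef]
    field_simp [hne z hzre]
  rw [hfz, norm_mul, norm_pow]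
  have hle2 : ‖z + 1 + I‖ ≤ ‖z‖ + 2 := by
    calc ‖z + 1 + I‖ ≤ ‖z + 1‖ + ‖I‖ := norm_add_le _ _
      _ ≤ ‖z‖ + ‖(1:ℂ)‖ + ‖I‖ := by gcongr; exact norm_add_le _ _
      _ = ‖z‖ + 2 := by simp; ring
  calc ‖g z‖ * ‖z + 1 + I‖ ^ N ≤ C₁ * (‖z‖ + 2) ^ N := by
        apply mul_le_mul hq (by gcongr) (by positivity) hC₁
/-- Lemma 3.6: under the hypotheses of Lemma 3.5, if moreover `F(x) → 0` as
`x → +∞` along the real axis, then `F` vanishes identically. -/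

theorem stmt_6 (F : ℂ → ℂ) (hF : Differentiable ℂ F)
    (C A M : ℝ) (hC : 0 < C) (hA : 0 < A) (hM : 0 < M) (N : ℕ)
    (h1 : ∀ z : ℂ, ‖F z‖ ≤ C * Real.exp (A * |z.im|))
    (h2 : ∀ z : ℂ, z.re = 0 → M ≤ ‖z‖ → ‖F z‖ ≤ C * ‖z‖ ^ N)
    (h3 : ∀ x : ℝ, ‖F (x : ℂ)‖ ≤ C)
    (hlim : Tendsto (fun x : ℝ => F (x : ℂ)) atTop (nhds 0)) :
    ∀ z : ℂ, F z = 0 := by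
  set C₁ : ℝ := C * Real.exp (A * M) with hC₁def
  have hexp1 : 1 ≤ Real.exp (A * M) := Real.one_le_exp (by positivity)
  have hC₁ : 0 < C₁ := by positivity
  have hCC₁ : C ≤ C₁ := le_mul_of_one_le_right hC.le hexp1
  have hGrow : ∀ z : ℂ, ‖F z‖ ≤ C * Real.exp (A * ‖z‖) := by
    intro z
    refine (h1 z).trans (mul_le_mul_of_nonneg_left (Real.exp_le_exp.mpr
      (mul_le_mul_of_nonneg_left (by
        exact Complex.abs_im_le_norm z) hA.le)) hC.le)
  have hmax1 : ∀ x : ℝ, (1:ℝ) ≤ max 1 |x| ^ N := fun x => one_le_pow₀ (le_max_left _ _)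
  have hRe : ∀ x : ℝ, ‖F (x : ℂ)‖ ≤ C₁ * max 1 |x| ^ N := by
    intro x
    calc ‖F (x:ℂ)‖ ≤ C := h3 x
      _ ≤ C₁ := hCC₁
      _ ≤ C₁ * max 1 |x| ^ N := le_mul_of_one_le_right hC₁.le (hmax1 x)
  have hIm : ∀ x : ℝ, ‖F ((x : ℂ) * I)‖ ≤ C₁ * max 1 |x| ^ N := by
    intro x
    have hnx : ‖(x:ℂ) * I‖ = |x| := by
      rw [norm_mul, Complex.norm_I, mul_one, Complex.norm_real, Real.norm_eq_abs]
    rcases le_or_gt M |x| with h | h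
    · have := h2 ((x:ℂ) * I) (by simp) (by rw [hnx]; exact h)
      rw [hnx] at this
      refine this.trans (mul_le_mul hCC₁
        (pow_le_pow_left₀ (abs_nonneg x) (le_max_right _ _) N) (by positivity) hC₁.le)
    · have := h1 ((x:ℂ) * I)
      have him : |((x:ℂ) * I).im| = |x| := by simp
      rw [him] at this
      calc ‖F ((x:ℂ) * I)‖ ≤ C * Real.exp (A * |x|) := this
        _ ≤ C * Real.exp (A * M) := mul_le_mul_of_nonneg_left (Real.exp_le_exp.mpr
              (mul_le_mul_of_nonneg_left h.le hA.le)) hC.le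
        _ = C₁ := rfl
        _ ≤ C₁ * max 1 |x| ^ N := le_mul_of_one_le_right hC₁.le (hmax1 x)
  have hGlob : ∀ z : ℂ, ‖F z‖ ≤ C₁ * (‖z‖ + 2) ^ N := by
    intro z
    rcases le_or_gt 0 z.re with hr | hr <;> rcases le_or_gt 0 z.im with hi | hi
    · exact quad_bound F hF A C C₁ hC₁.le N hGrow
        (fun x hx => by rw [show (1:ℝ) ⊔ x = 1 ⊔ |x| from by rw [_root_.abs_of_nonneg hx]]; exact hRe x)
        (fun x hx => by rw [show (1:ℝ) ⊔ x = 1 ⊔ |x| from by rw [_root_.abs_of_nonneg hx]]; exact hIm x) z hr hi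
    · -- re ≥ 0, im < 0 : use f w = F (w * (-I)) at w = z * I
      have key := quad_bound (fun w => F (w * (-I)))
        (hF.comp (differentiable_id.mul_const _)) A C C₁ hC₁.le N
        (fun w => by simpa using hGrow (w * (-I)))
        (fun x hx => by
          have h0 := hIm (-x)
          rw [abs_neg, show ((-x : ℝ) : ℂ) * I = (x:ℂ) * -I by push_cast; ring] at h0
          rw [show (1:ℝ) ⊔ x = 1 ⊔ |x| from by rw [_root_.abs_of_nonneg hx]]
          exact h0)
        (fun x hx => by
          have h0 := hRe x
          rw [show ((x : ℝ) : ℂ) = (x:ℂ) * I * -I by rw [mul_assoc]; simp] at h0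
          rw [show (1:ℝ) ⊔ x = 1 ⊔ |x| from by rw [_root_.abs_of_nonneg hx]]
          exact h0)
        (z * I) (by simp [Complex.mul_re]; linarith) (by simp [Complex.mul_im]; linarith)
      have key' : ‖F (z * I * -I)‖ ≤ C₁ * (‖z * I‖ + 2) ^ N := key
      rw [show z * I * -I = z by rw [mul_assoc]; simp] at key'
      simpa using key'
    · -- re < 0, im ≥ 0 : use f w = F (w * I) at w = z * (-I)
      have key := quad_bound (fun w => F (w * I))
        (hF.comp (differentiable_id.mul_const _)) A C C₁ hC₁.le N
        (fun w => by simpa using hGrow (w * I))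
        (fun x hx => by rw [show (1:ℝ) ⊔ x = 1 ⊔ |x| from by rw [_root_.abs_of_nonneg hx]]; exact hIm x)
        (fun x hx => by
          have h0 := hRe (-x)
          rw [abs_neg, show ((-x : ℝ) : ℂ) = (x:ℂ) * I * I by
            rw [mul_assoc, Complex.I_mul_I]; push_cast; ring] at h0
          rw [show (1:ℝ) ⊔ x = 1 ⊔ |x| from by rw [_root_.abs_of_nonneg hx]]
          exact h0)
        (z * (-I)) (by simp [Complex.mul_re]; linarith) (by simp [Complex.mul_im]; linarith)
      have key' : ‖F (z * -I * I)‖ ≤ C₁ * (‖z * -I‖ + 2) ^ N := key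
      rw [show z * -I * I = z by rw [mul_assoc]; simp] at key'
      simpa using key'
    · -- re < 0, im < 0 : use f w = F (-w) at w = -z
      have key := quad_bound (fun w => F (-w)) (hF.comp differentiable_neg)
        A C C₁ hC₁.le N
        (fun w => by simpa using hGrow (-w))
        (fun x hx => by
          have h0 := hRe (-x)
          rw [abs_neg, show ((-x : ℝ) : ℂ) = -((x:ℝ):ℂ) by push_cast; ring] at h0
          rw [show (1:ℝ) ⊔ x = 1 ⊔ |x| from by rw [_root_.abs_of_nonneg hx]]
          exact h0)
        (fun x hx => by
          have h0 := hIm (-x)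
          rw [abs_neg, show ((-x : ℝ) : ℂ) * I = -((x:ℂ) * I) by push_cast; ring] at h0
          rw [show (1:ℝ) ⊔ x = 1 ⊔ |x| from by rw [_root_.abs_of_nonneg hx]]
          exact h0)
        (-z) (by simp; linarith) (by simp; linarith)
      have key' : ‖F (-(-z))‖ ≤ C₁ * (‖-z‖ + 2) ^ N := key
      simpa using key'
  have hGlob' : ∀ z : ℂ, ‖F z‖ ≤ (C₁ * 2 ^ N) * (1 + ‖z‖) ^ N := by
    intro z
    have h2z : ‖z‖ + 2 ≤ 2 * (1 + ‖z‖) := by linarith [norm_nonneg z]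
    calc ‖F z‖ ≤ C₁ * (‖z‖ + 2) ^ N := hGlob z
      _ ≤ C₁ * (2 * (1 + ‖z‖)) ^ N :=
          mul_le_mul_of_nonneg_left (pow_le_pow_left₀ (by positivity) h2z N) hC₁.le
      _ = (C₁ * 2 ^ N) * (1 + ‖z‖) ^ N := by rw [mul_pow]; ring
  exact poly_liouville N F hF (C₁ * 2 ^ N) hGlob' hlim
end

section
/- Laplace-transform-type uniqueness: let a > 0 and let g : ℝ → ℝ be continuous on [0, a]. Suppose there exist constants C > 0 and s₀ > 0 such that |∫_0^a g(t)·e^{s·t} dt| ≤ C for all s > s₀. Then g(t) = 0 for all t ∈ [0, a]. -/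
open Set intervalIntegral Filter

private lemma aux_unique (a : ℝ) (ha : 0 < a) (g : ℝ → ℝ) (hg : Continuous g)
    (C s₀ : ℝ) (hC : 0 < C) (hs₀ : 0 < s₀)
    (hbd : ∀ s > s₀, |∫ t in (0:ℝ)..a, g t * Real.exp (s * t)| ≤ C) :
    ∀ t ∈ Icc (0:ℝ) a, g t = 0 := by
  obtain ⟨M, hM⟩ :=
    (isCompact_Icc (a := (0:ℝ)) (b := a)).exists_bound_of_continuousOn hg.continuousOn
  have hMnn : 0 ≤ M := (norm_nonneg (g 0)).trans (hM 0 ⟨le_rfl, ha.le⟩)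
  have hMabs : ∀ t ∈ Set.uIoc (0:ℝ) a, |g t| ≤ M := by
    intro t ht
    rw [Set.uIoc_of_le ha.le] at ht
    exact hM t ⟨ht.1.le, ht.2⟩
  -- continuity of integrands
  have hcont : ∀ z : ℂ, Continuous fun t : ℝ => (g t : ℂ) * Complex.exp (z * t) := fun z =>
    (Complex.continuous_ofReal.comp hg).mul
      (Complex.continuous_exp.comp (continuous_const.mul Complex.continuous_ofReal))
  set H : ℂ → ℂ := fun z => ∫ t in (0:ℝ)..a, (g t : ℂ) * Complex.exp (z * t) with hH
  have hreal : ∀ x : ℝ, H x = ((∫ t in (0:ℝ)..a, g t * Real.exp (x * t) : ℝ) : ℂ) := by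
    intro x
    rw [hH, ← intervalIntegral.integral_ofReal]
    apply intervalIntegral.integral_congr
    intro t _
    push_cast
    ring
  have hnorm : ∀ (z : ℂ) (t : ℝ), ‖(g t : ℂ) * Complex.exp (z * t)‖
      = |g t| * Real.exp (z.re * t) := by
    intro z t
    simp [map_mul, Complex.norm_exp, Complex.mul_re]
  -- a bound on the integral whenever the real part of the exponent is bounded
  have hIb : ∀ z : ℂ, ∀ R : ℝ, (∀ t ∈ Set.uIoc (0:ℝ) a, z.re * t ≤ R) →
      ‖H z‖ ≤ M * Real.exp R * a := by
    intro z R hR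
    rw [hH]
    have h := intervalIntegral.norm_integral_le_of_norm_le_const
      (C := M * Real.exp R)
      (f := fun t : ℝ => (g t : ℂ) * Complex.exp (z * t)) (a := (0:ℝ)) (b := a) ?_
    · rwa [sub_zero, abs_of_pos ha] at h
    · intro t ht
      rw [hnorm]
      exact mul_le_mul (hMabs t ht) (Real.exp_le_exp.2 (hR t ht)) (Real.exp_pos _).le hMnn
  -- a global growth bound
  have hHbound : ∀ z : ℂ, ‖H z‖ ≤ M * Real.exp (‖z‖ * a) * a := by
    intro z
    apply hIb
    intro t ht
    rw [Set.uIoc_of_le ha.le] at ht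
    calc z.re * t ≤ ‖z‖ * t :=
          mul_le_mul_of_nonneg_right (Complex.re_le_norm z) ht.1.le
      _ ≤ ‖z‖ * a := mul_le_mul_of_nonneg_left ht.2 (norm_nonneg z)
  -- `H` is entire
  have hHdiff : Differentiable ℂ H := by
    intro z₀
    have key := intervalIntegral.hasDerivAt_integral_of_dominated_loc_of_deriv_le
      (F := fun (z : ℂ) (t : ℝ) => (g t : ℂ) * Complex.exp (z * t))
      (F' := fun (z : ℂ) (t : ℝ) => (g t : ℂ) * (Complex.exp (z * t) * t))
      (μ := MeasureTheory.volume) (a := (0:ℝ)) (b := a) (x₀ := z₀) (s := Metric.ball z₀ 1)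
      (bound := fun _ => M * (Real.exp ((‖z₀‖ + 1) * a) * a))
      (Metric.ball_mem_nhds z₀ one_pos)
      (Eventually.of_forall fun x => ((hcont x).aestronglyMeasurable))
      ((hcont z₀).intervalIntegrable _ _)
      (((Complex.continuous_ofReal.comp hg).mul
        ((Complex.continuous_exp.comp (continuous_const.mul Complex.continuous_ofReal)).mul
          Complex.continuous_ofReal)).aestronglyMeasurable)
      (MeasureTheory.ae_of_all _ fun t ht x hx => ?_)
      intervalIntegrable_const
      (MeasureTheory.ae_of_all _ fun t _ x _ => ?_)
    · exact key.2.differentiableAt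
    · -- bound on the derivative
      have ht' := ht
      rw [Set.uIoc_of_le ha.le] at ht'
      have hxa : ‖x‖ ≤ ‖z₀‖ + 1 := by
        calc ‖x‖ = ‖z₀ + (x - z₀)‖ := by ring_nf
          _ ≤ ‖z₀‖ + ‖x - z₀‖ := norm_add_le _ _
          _ ≤ ‖z₀‖ + 1 := by
              have := Metric.mem_ball.1 hx
              rw [dist_eq_norm] at this
              exact (add_le_add_iff_left _).2 this.le
      have h1 : x.re * t ≤ (‖z₀‖ + 1) * a := by
        calc x.re * t ≤ ‖x‖ * t :=
              mul_le_mul_of_nonneg_right (Complex.re_le_norm x) ht'.1.le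
          _ ≤ (‖z₀‖ + 1) * a :=
              mul_le_mul hxa ht'.2 ht'.1.le (by have := norm_nonneg z₀; linarith)
      have : ‖(g t : ℂ) * (Complex.exp (x * t) * t)‖
          = |g t| * (Real.exp (x.re * t) * |t|) := by
        simp [map_mul, Complex.norm_exp, Complex.mul_re]
      rw [this, abs_of_pos ht'.1]
      have e1 : Real.exp (x.re * t) * t ≤ Real.exp ((‖z₀‖ + 1) * a) * a :=
        mul_le_mul (Real.exp_le_exp.2 h1) ht'.2 ht'.1.le (Real.exp_pos _).le
      exact mul_le_mul (hMabs t ht) e1 (mul_nonneg (Real.exp_pos _).le ht'.1.le) hMnn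
    · -- differentiation under the integral sign
      exact ((hasDerivAt_mul_const (t : ℂ)).cexp).const_mul ((g t : ℂ))
  -- `H` is bounded on both axes
  set K : ℝ := max C (M * Real.exp ((s₀ + 1) * a) * a) with hK
  have hexp1 : (1:ℝ) ≤ Real.exp ((s₀ + 1) * a) := by
    rw [Real.one_le_exp_iff]; positivity
  have hKim : ∀ y : ℝ, ‖H ((y : ℂ) * Complex.I)‖ ≤ K := by
    intro y
    have h0 : ((y : ℂ) * Complex.I).re = 0 := by simp
    have := hIb ((y : ℂ) * Complex.I) 0 (fun t _ => by rw [h0]; simp)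
    refine le_trans this (le_trans ?_ (le_max_right _ _))
    rw [Real.exp_zero]
    nlinarith [mul_le_mul_of_nonneg_left hexp1 (mul_nonneg hMnn ha.le)]
  have hKre : ∀ x : ℝ, ‖H (x : ℂ)‖ ≤ K := by
    intro x
    rcases lt_or_ge s₀ x with hx | hx
    · rw [hreal x, Complex.norm_real, Real.norm_eq_abs]
      exact le_trans (hbd x hx) (le_max_left _ _)
    · have h0 : ((x : ℂ)).re = x := by simp
      have := hIb (x : ℂ) ((s₀ + 1) * a) ?_
      · exact le_trans this (le_max_right _ _)
      · intro t ht
        rw [h0]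
        rw [Set.uIoc_of_le ha.le] at ht
        rcases le_or_gt x 0 with hx0 | hx0
        · have : x * t ≤ 0 := mul_nonpos_iff.2 (Or.inr ⟨hx0, ht.1.le⟩)
          nlinarith
        · calc x * t ≤ s₀ * a := mul_le_mul hx ht.2 ht.1.le hs₀.le
            _ ≤ (s₀ + 1) * a := by nlinarith
  -- growth condition for Phragmén–Lindelöf
  have hgrow : ∀ S : Set ℂ, ∃ c < (2:ℝ), ∃ B, H =O[Bornology.cobounded ℂ ⊓ Filter.principal S]
      fun z => Real.exp (B * ‖z‖ ^ (c : ℝ)) := by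
    intro S
    refine ⟨1, one_lt_two, a, Asymptotics.IsBigO.of_bound (M * a)
      (Eventually.of_forall fun z => ?_)⟩
    rw [Real.norm_of_nonneg (Real.exp_pos _).le, Real.rpow_one]
    calc ‖H z‖ ≤ M * Real.exp (‖z‖ * a) * a := hHbound z
      _ = M * a * Real.exp (a * ‖z‖) := by rw [mul_comm (‖z‖) a]; ring
  -- Phragmén–Lindelöf in all four quadrants: `H` is bounded
  have hbdd : ∀ z : ℂ, ‖H z‖ ≤ K := by
    intro z
    rcases le_or_gt 0 z.re with hre | hre <;> rcases le_or_gt 0 z.im with him | him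
    · exact PhragmenLindelof.quadrant_I hHdiff.diffContOnCl (hgrow _)
        (fun x _ => hKre x) (fun x _ => hKim x) hre him
    · exact PhragmenLindelof.quadrant_IV hHdiff.diffContOnCl (hgrow _)
        (fun x _ => hKre x) (fun x _ => hKim x) hre him.le
    · exact PhragmenLindelof.quadrant_II hHdiff.diffContOnCl (hgrow _)
        (fun x _ => hKre x) (fun x _ => hKim x) hre.le him
    · exact PhragmenLindelof.quadrant_III hHdiff.diffContOnCl (hgrow _)
        (fun x _ => hKre x) (fun x _ => hKim x) hre.le him.le
  -- Liouville: `H` is constant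
  have hconst : ∀ z w : ℂ, H z = H w := fun z w =>
    hHdiff.apply_eq_apply_of_bounded
      (isBounded_iff_forall_norm_le.2 ⟨K, by rintro x ⟨z, rfl⟩; exact hbdd z⟩) z w
  have hIconst : ∀ x y : ℝ, (∫ t in (0:ℝ)..a, g t * Real.exp (x * t))
      = ∫ t in (0:ℝ)..a, g t * Real.exp (y * t) := by
    intro x y
    have := hconst x y
    rw [hreal x, hreal y] at this
    exact_mod_cast this
  -- dominated convergence: the common value is 0
  have hlim : Tendsto (fun n : ℕ => ∫ t in (0:ℝ)..a, g t * Real.exp (-(n:ℝ) * t))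
      atTop (nhds (∫ t in (0:ℝ)..a, (0:ℝ))) := by
    apply intervalIntegral.tendsto_integral_filter_of_dominated_convergence
      (bound := fun _ => M)
    · exact Eventually.of_forall fun n =>
        (hg.mul
          (Real.continuous_exp.comp (continuous_const.mul continuous_id))).aestronglyMeasurable
    · refine Eventually.of_forall fun n => MeasureTheory.ae_of_all _ fun t ht => ?_
      have ht' := ht
      rw [Set.uIoc_of_le ha.le] at ht'
      rw [Real.norm_eq_abs, abs_mul, Real.abs_exp]
      have h1 : Real.exp (-(n:ℝ) * t) ≤ 1 := by
        rw [Real.exp_le_one_iff]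
        have : (0:ℝ) ≤ (n:ℝ) * t := mul_nonneg (Nat.cast_nonneg n) ht'.1.le
        linarith
      nlinarith [hMabs t ht, abs_nonneg (g t)]
    · exact intervalIntegrable_const
    · refine MeasureTheory.ae_of_all _ fun t ht => ?_
      rw [Set.uIoc_of_le ha.le] at ht
      have h1 : Tendsto (fun n : ℕ => -(n:ℝ) * t) atTop atBot := by
        have := (tendsto_natCast_atTop_atTop (R := ℝ)).atTop_mul_const ht.1
        rw [← tendsto_neg_atBot_iff] at this
        simpa [neg_mul] using this
      have h2 : Tendsto (fun n : ℕ => Real.exp (-(n:ℝ) * t)) atTop (nhds 0) :=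
        Real.tendsto_exp_atBot.comp h1
      have := h2.const_mul (g t)
      simpa using this
  have hzero : ∀ s : ℝ, (∫ t in (0:ℝ)..a, g t * Real.exp (s * t)) = 0 := by
    have hconstseq : (fun n : ℕ => ∫ t in (0:ℝ)..a, g t * Real.exp (-(n:ℝ) * t))
        = fun _ : ℕ => ∫ t in (0:ℝ)..a, g t * Real.exp (0 * t) := by
      funext n; exact hIconst _ _
    rw [hconstseq] at hlim
    have h0 : (∫ t in (0:ℝ)..a, g t * Real.exp (0 * t)) = ∫ t in (0:ℝ)..a, (0:ℝ) :=
      tendsto_nhds_unique tendsto_const_nhds hlim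
    intro s
    rw [hIconst s 0, h0, intervalIntegral.integral_zero]
  -- all moments of `exp t` vanish
  have hmom : ∀ n : ℕ, (∫ t in (0:ℝ)..a, g t * (Real.exp t) ^ n) = 0 := by
    intro n
    have heq : (∫ t in (0:ℝ)..a, g t * (Real.exp t) ^ n)
        = ∫ t in (0:ℝ)..a, g t * Real.exp ((n:ℝ) * t) :=
      intervalIntegral.integral_congr (fun t _ => by rw [← Real.exp_nat_mul])
    rw [heq]; exact hzero _
  have hcontp : ∀ p : Polynomial ℝ, Continuous fun t : ℝ => g t * p.eval (Real.exp t) :=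
    fun p => hg.mul (p.continuous.comp Real.continuous_exp)
  have hpoly : ∀ p : Polynomial ℝ, (∫ t in (0:ℝ)..a, g t * p.eval (Real.exp t)) = 0 := by
    intro p
    induction p using Polynomial.induction_on' with
    | add p q hp hq =>
        have heq : (fun t => g t * Polynomial.eval (Real.exp t) (p + q))
            = fun t => g t * Polynomial.eval (Real.exp t) p
              + g t * Polynomial.eval (Real.exp t) q := by
          funext t; rw [Polynomial.eval_add]; ring
        rw [heq, intervalIntegral.integral_add ((hcontp p).intervalIntegrable _ _)
          ((hcontp q).intervalIntegrable _ _), hp, hq, add_zero]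
    | monomial n c =>
        have heq : (fun t => g t * Polynomial.eval (Real.exp t) (Polynomial.monomial n c))
            = fun t => c * (g t * Real.exp t ^ n) := by
          funext t; rw [Polynomial.eval_monomial]; ring
        rw [heq, intervalIntegral.integral_const_mul, hmom n, mul_zero]
  -- Weierstrass approximation: `∫ g² = 0`
  have hsq : (∫ t in (0:ℝ)..a, g t * g t) = 0 := by
    have key : ∀ ε > (0:ℝ), |∫ t in (0:ℝ)..a, g t * g t| ≤ M * ε * a := by
      intro ε hε
      have hφ : ContinuousOn (fun u => g (Real.log u)) (Icc 1 (Real.exp a)) := by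
        apply hg.comp_continuousOn
        apply Real.continuousOn_log.mono
        intro u hu
        simp only [mem_compl_iff, mem_singleton_iff]
        intro h
        rw [h] at hu
        exact absurd hu.1 (by norm_num)
      obtain ⟨p, hp⟩ := exists_polynomial_near_of_continuousOn 1 (Real.exp a)
        (fun u => g (Real.log u)) hφ ε hε
      have heq : (∫ t in (0:ℝ)..a, g t * g t)
          = ∫ t in (0:ℝ)..a, g t * (g t - p.eval (Real.exp t)) := by
        have hsub : (fun t => g t * (g t - p.eval (Real.exp t)))
            = fun t => g t * g t - g t * p.eval (Real.exp t) := by funext t; ring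
        rw [hsub, intervalIntegral.integral_sub (f := fun t => g t * g t) ((hg.mul hg).intervalIntegrable _ _)
          ((hcontp p).intervalIntegrable _ _), hpoly p, sub_zero]
      rw [heq]
      have h := intervalIntegral.norm_integral_le_of_norm_le_const (C := M * ε)
        (f := fun t => g t * (g t - p.eval (Real.exp t))) (a := (0:ℝ)) (b := a) ?_
      · rw [sub_zero, abs_of_pos ha] at h
        exact h
      · intro t ht
        have ht' := ht
        rw [Set.uIoc_of_le ha.le] at ht'
        have hmem : Real.exp t ∈ Icc (1:ℝ) (Real.exp a) :=
          ⟨Real.one_le_exp ht'.1.le, Real.exp_le_exp.2 ht'.2⟩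
        have := hp (Real.exp t) hmem
        rw [Real.log_exp] at this
        rw [Real.norm_eq_abs, abs_mul]
        have h2 : |g t - p.eval (Real.exp t)| ≤ ε := by
          rw [abs_sub_comm]; exact this.le
        exact mul_le_mul (hMabs t ht) h2 (abs_nonneg _) hMnn
    by_contra hne
    have habs : 0 < |∫ t in (0:ℝ)..a, g t * g t| := abs_pos.2 hne
    have hεp : 0 < |∫ t in (0:ℝ)..a, g t * g t| / (M * a + 1) := by positivity
    have this1 := key _ hεp
    have hD : (0:ℝ) < M * a + 1 := by positivity
    have h3 : M * (|∫ t in (0:ℝ)..a, g t * g t| / (M * a + 1)) * a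
        = (M * a * |∫ t in (0:ℝ)..a, g t * g t|) / (M * a + 1) := by ring
    rw [h3, le_div_iff₀ hD] at this1
    nlinarith [habs]
  -- conclude pointwise vanishing
  intro t₀ ht₀
  by_contra hne
  have hc : 0 < g t₀ * g t₀ := by
    rcases lt_or_gt_of_ne hne with h | h
    · exact mul_pos_of_neg_of_neg h h
    · exact mul_pos h h
  set c := g t₀ * g t₀ / 2 with hcdef
  have hcpos : 0 < c := by positivity
  obtain ⟨δ, hδ, hδ2⟩ := Metric.continuousAt_iff.1 ((hg.mul hg).continuousAt (x := t₀)) c hcpos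
  set u := max 0 (t₀ - δ/2) with hu
  set v := min a (t₀ + δ/2) with hv
  have hu0 : 0 ≤ u := le_max_left _ _
  have hva : v ≤ a := min_le_left _ _
  have hut : u ≥ t₀ - δ/2 := le_max_right _ _
  have hvt : v ≤ t₀ + δ/2 := min_le_right _ _
  have huv : u < v := by
    rcases lt_or_eq_of_le ht₀.2 with h | h
    · have h1 : u ≤ t₀ := max_le ht₀.1 (by linarith)
      have h2 : t₀ < v := lt_min h (by linarith)
      linarith
    · have h1 : u < a := max_lt ha (by linarith)
      have h2 : v = a := by rw [hv, ← h]; exact min_eq_left (by linarith)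
      linarith
  have hlow : ∀ t ∈ Icc u v, c ≤ g t * g t := by
    intro t ht
    have hdist : dist t t₀ < δ := by
      rw [Real.dist_eq, abs_sub_lt_iff]
      constructor <;> [linarith [ht.2]; linarith [ht.1]]
    have := hδ2 hdist
    rw [Real.dist_eq, abs_sub_lt_iff] at this
    have := this.2
    simp only [hcdef, Pi.mul_apply] at this ⊢
    linarith
  have hint : ∀ x y : ℝ, IntervalIntegrable (fun t => g t * g t) MeasureTheory.volume x y :=
    fun x y => (hg.mul hg).intervalIntegrable x y
  have hsplit1 : (∫ t in (0:ℝ)..u, g t * g t) + (∫ t in u..v, g t * g t)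
      = ∫ t in (0:ℝ)..v, g t * g t :=
    intervalIntegral.integral_add_adjacent_intervals (hint 0 u) (hint u v)
  have hsplit2 : (∫ t in (0:ℝ)..v, g t * g t) + (∫ t in v..a, g t * g t)
      = ∫ t in (0:ℝ)..a, g t * g t :=
    intervalIntegral.integral_add_adjacent_intervals (hint 0 v) (hint v a)
  have hn1 : 0 ≤ ∫ t in (0:ℝ)..u, g t * g t :=
    intervalIntegral.integral_nonneg hu0 (fun t _ => mul_self_nonneg _)
  have hn3 : 0 ≤ ∫ t in v..a, g t * g t :=
    intervalIntegral.integral_nonneg hva (fun t _ => mul_self_nonneg _)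
  have hmid : c * (v - u) ≤ ∫ t in u..v, g t * g t := by
    have h1 : (∫ _t in u..v, c) ≤ ∫ t in u..v, g t * g t :=
      intervalIntegral.integral_mono_on huv.le intervalIntegrable_const (hint u v) hlow
    rwa [intervalIntegral.integral_const, smul_eq_mul, mul_comm] at h1
  nlinarith [mul_pos hcpos (sub_pos.2 huv)]

/-- Step 5 of the proof of Theorem 1.2: if the growing exponential moments
`∫_0^a g(t) e^{st} dt` stay bounded for all large `s`, then `g ≡ 0` on `[0, a]`. -/
theorem stmt_7 (a : ℝ) (ha : 0 < a) (g : ℝ → ℝ)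
    (hg : ContinuousOn g (Icc 0 a))
    (C s₀ : ℝ) (hC : 0 < C) (hs₀ : 0 < s₀)
    (hbd : ∀ s > s₀, |∫ t in (0:ℝ)..a, g t * Real.exp (s * t)| ≤ C) :
    ∀ t ∈ Icc (0:ℝ) a, g t = 0 := by
  set cl : ℝ → ℝ := fun t => min (max t 0) a with hcl
  have hcc : Continuous cl := (continuous_id.max continuous_const).min continuous_const
  have hmaps : ∀ t, cl t ∈ Icc (0:ℝ) a :=
    fun t => ⟨le_min (le_max_right t 0) ha.le, min_le_right _ _⟩
  have hgc : Continuous fun t => g (cl t) := hg.comp_continuous hcc hmaps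
  have hEq : ∀ t ∈ Icc (0:ℝ) a, cl t = t := by
    intro t ht
    rw [hcl]
    simp only [max_eq_left ht.1, min_eq_left ht.2]
  have hbd' : ∀ s > s₀, |∫ t in (0:ℝ)..a, g (cl t) * Real.exp (s * t)| ≤ C := by
    intro s hs
    have heq : (∫ t in (0:ℝ)..a, g (cl t) * Real.exp (s * t))
        = ∫ t in (0:ℝ)..a, g t * Real.exp (s * t) := by
      apply intervalIntegral.integral_congr
      intro t ht
      rw [uIcc_of_le ha.le] at ht
      show g (cl t) * Real.exp (s * t) = g t * Real.exp (s * t)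
      rw [hEq t ht]
    rw [heq]; exact hbd s hs
  intro t ht
  have h2 : g (cl t) = 0 := aux_unique a ha (fun t => g (cl t)) hgc C s₀ hC hs₀ hbd' t ht
  rwa [hEq t ht] at h2
end

section
/- Derivative of the Mittag-Leffler function along a power: define, for real parameters α > 0 and β > 0, the Mittag-Leffler function E_{α,β}(x) = Σ_{k=0}^∞ x^k / Γ(αk + β) (the series converges for every real x). Then for every 0 < α < 1, every real λ, and every t > 0, the function t ↦ E_{α,1}(−λ·t^α) is differentiable at t with derivative −λ·t^{α−1}·E_{α,α}(−λ·t^α). -/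
open Real Set


lemma ml_step (α β r : ℝ) (hα : 0 < α) (hβ : 0 < β) (hr : 0 < r) :
    ∃ N K : ℕ, 0 < N ∧ ∀ k : ℕ, K ≤ k →
      r ^ (k + N) / Real.Gamma (α * (k + N) + β)
        ≤ (1/2) * (r ^ k / Real.Gamma (α * k + β)) := by
  refine ⟨⌈1/α⌉₊ + 1, ⌈(2 + 2 * r ^ (⌈1/α⌉₊ + 1)) / α⌉₊, Nat.succ_pos _, fun k hk => ?_⟩
  set N := ⌈1/α⌉₊ + 1 with hN
  have hNα : 1 ≤ α * N := by
    have h1 : 1/α ≤ (N:ℝ) := by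
      have := Nat.le_ceil (1/α)
      push_cast [hN]
      linarith
    calc (1:ℝ) = α * (1/α) := by field_simp
    _ ≤ α * N := by nlinarith
  push_cast at hNα
  have hK : 2 + 2 * r ^ N ≤ α * k := by
    have h1 : (2 + 2 * r ^ N) / α ≤ (k:ℝ) := by
      calc (2 + 2 * r ^ N) / α ≤ (⌈(2 + 2 * r ^ N) / α⌉₊ : ℝ) := Nat.le_ceil _
      _ ≤ k := by exact_mod_cast hk
    calc 2 + 2 * r ^ N = ((2 + 2 * r ^ N)/α) * α := by field_simp
    _ ≤ k * α := by
        apply mul_le_mul_of_nonneg_right h1 hα.le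
    _ = α * k := mul_comm _ _
  have hrN : 0 < r ^ N := pow_pos hr N
  have hy : (2:ℝ) ≤ α * k + β := by nlinarith
  have hy0 : 0 < α * k + β := by linarith
  have hΓpos : 0 < Real.Gamma (α * k + β) := Real.Gamma_pos_of_pos hy0
  have hmono : Real.Gamma (α * k + β + 1) ≤ Real.Gamma (α * (k + N) + β) := by
    apply Real.Gamma_strictMonoOn_Ici.monotoneOn
    · simp only [mem_Ici]; linarith
    · simp only [mem_Ici]
      push_cast
      nlinarith
    · push_cast
      nlinarith
  have hΓ1 : Real.Gamma (α * k + β + 1) = (α * k + β) * Real.Gamma (α * k + β) :=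
    Real.Gamma_add_one (by linarith)
  have hΓbig : 0 < Real.Gamma (α * (k + N) + β) :=
    Real.Gamma_pos_of_pos (by push_cast; nlinarith)
  calc r ^ (k + N) / Real.Gamma (α * (k + N) + β)
      ≤ r ^ (k + N) / ((α * k + β) * Real.Gamma (α * k + β)) := by
        apply div_le_div_of_nonneg_left (pow_pos hr _).le (by positivity)
        rw [← hΓ1]; exact hmono
    _ = (r ^ N / (α * k + β)) * (r ^ k / Real.Gamma (α * k + β)) := by
        rw [pow_add]; field_simp
    _ ≤ (1/2) * (r ^ k / Real.Gamma (α * k + β)) := by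
        apply mul_le_mul_of_nonneg_right _ (by positivity)
        rw [div_le_iff₀ hy0]
        nlinarith

lemma ml_summable (α β r : ℝ) (hα : 0 < α) (hβ : 0 < β) (hr : 0 ≤ r) :
    Summable (fun k : ℕ => r ^ k / Real.Gamma (α * k + β)) := by
  rcases hr.eq_or_lt with h | hr
  · apply summable_of_ne_finset_zero (s := {0})
    intro k hk
    simp only [Finset.mem_singleton] at hk
    simp [← h, zero_pow hk]
  obtain ⟨N, K, hN, hstep⟩ := ml_step α β r hα hβ hr
  set a : ℕ → ℝ := fun k => r ^ k / Real.Gamma (α * k + β) with ha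
  have hpos : ∀ k : ℕ, 0 < α * k + β := fun k => by positivity
  have hanonneg : ∀ k, 0 ≤ a k := fun k =>
    div_nonneg (pow_nonneg hr.le _) (Real.Gamma_pos_of_pos (hpos k)).le
  set ρ : ℝ := (2:ℝ)⁻¹ ^ ((N:ℝ)⁻¹) with hρ
  have hρ0 : 0 < ρ := Real.rpow_pos_of_pos (by norm_num) _
  have hρ1 : ρ < 1 := Real.rpow_lt_one (by norm_num) (by norm_num)
    (by positivity)
  have hρN : ρ ^ N = 1/2 := by
    rw [hρ, ← Real.rpow_natCast ((2:ℝ)⁻¹ ^ ((N:ℝ)⁻¹)) N, ← Real.rpow_mul (by norm_num),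
      inv_mul_cancel₀ (by exact_mod_cast hN.ne')]
    norm_num
  set C : ℝ := ∑ i ∈ Finset.range (K + N), a i / ρ ^ i with hC
  have hbound : ∀ k, a k ≤ C * ρ ^ k := by
    intro k
    induction k using Nat.strong_induction_on with
    | _ k ih =>
      rcases lt_or_ge k (K + N) with hk | hk
      · have h1 : a k / ρ ^ k ≤ C := by
          apply Finset.single_le_sum (f := fun i => a i / ρ ^ i)
            (fun i _ => by positivity) (Finset.mem_range.2 hk)
        rw [div_le_iff₀ (by positivity)] at h1
        linarith
      · have hkN : N ≤ k := le_trans (Nat.le_add_left N K) hk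
        have hK : K ≤ k - N := by omega
        have hsub : (k - N) + N = k := by omega
        have h2 := hstep (k - N) hK
        have hc : ((k - N : ℕ) : ℝ) + (N : ℝ) = (k : ℝ) := by
          exact_mod_cast congrArg (Nat.cast (R := ℝ)) hsub
        rw [hsub] at h2
        rw [show (α * (↑(k - N) + ↑N) + β) = α * (k:ℝ) + β by rw [hc]] at h2
        have h3 := ih (k - N) (by omega)
        calc a k ≤ (1/2) * a (k - N) := h2
          _ ≤ (1/2) * (C * ρ ^ (k - N)) := by
              apply mul_le_mul_of_nonneg_left h3 (by norm_num)
          _ = C * (ρ ^ N * ρ ^ (k - N)) := by rw [hρN]; ring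
          _ = C * ρ ^ k := by rw [← pow_add, Nat.add_sub_cancel' hkN]
  apply Summable.of_nonneg_of_le hanonneg hbound
  exact (summable_geometric_of_lt_one hρ0.le hρ1).mul_left C

lemma ml_summable' (α β x : ℝ) (hα : 0 < α) (hβ : 0 < β) :
    Summable (fun k : ℕ => x ^ k / Real.Gamma (α * k + β)) := by
  apply Summable.of_norm_bounded (ml_summable α β |x| hα hβ (abs_nonneg x))
  intro k
  have hΓ : 0 < Real.Gamma (α * k + β) := Real.Gamma_pos_of_pos (by positivity)
  rw [norm_div, norm_pow, Real.norm_eq_abs, Real.norm_eq_abs, abs_of_pos hΓ]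

/-- The (real) Mittag-Leffler function `E_{α,β}(x) = Σ_{k≥0} x^k / Γ(αk+β)`. -/
noncomputable def mittagLeffler (α β x : ℝ) : ℝ :=
  ∑' k : ℕ, x ^ k / Real.Gamma (α * k + β)

/-- Derivative of the Mittag-Leffler function along a power:
`d/dt E_{α,1}(-λ t^α) = -λ t^{α-1} E_{α,α}(-λ t^α)` for `t > 0`. -/
theorem stmt_12 (α lam t : ℝ) (hα0 : 0 < α) (hα1 : α < 1) (ht : 0 < t) :
    HasDerivAt (fun s : ℝ => mittagLeffler α 1 (-lam * s ^ α))
      (-lam * t ^ (α - 1) * mittagLeffler α α (-lam * t ^ α)) t := by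
  have ht2 : 0 < t / 2 := by linarith
  set S : Set ℝ := Set.Ioo (t / 2) (t + 1) with hS
  have htS : t ∈ S := ⟨by linarith, by linarith⟩
  set g : ℕ → ℝ → ℝ := fun k s => (-lam * s ^ α) ^ k / Real.Gamma (α * k + 1) with hg
  set g' : ℕ → ℝ → ℝ := fun k s =>
    ((k : ℝ) * (-lam * s ^ α) ^ (k - 1) * (-lam * (α * s ^ (α - 1)))) /
      Real.Gamma (α * k + 1) with hg'
  set R : ℝ := |lam| * (t + 1) ^ α with hR
  have hR0 : 0 ≤ R := by positivity
  set u : ℕ → ℝ := fun k =>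
    if k = 0 then 0 else 2 / t * (R ^ k / Real.Gamma (α * k)) with hu
  have hΓpos : ∀ k : ℕ, 0 < Real.Gamma (α * k + 1) :=
    fun k => Real.Gamma_pos_of_pos (by positivity)
  have hderiv : ∀ k : ℕ, ∀ y : ℝ, y ∈ S → HasDerivAt (g k) (g' k y) y := by
    intro k y hy
    have hy0 : 0 < y := lt_trans ht2 hy.1
    exact (((Real.hasDerivAt_rpow_const (Or.inl hy0.ne')).const_mul (-lam)).pow k).div_const _
  -- key norm formula
  have hkey : ∀ j : ℕ, ∀ y : ℝ, 0 < y →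
      ‖g' (j + 1) y‖ =
        |lam| ^ (j + 1) * y ^ (α * ((j : ℝ) + 1) - 1) / Real.Gamma (α * ((j : ℝ) + 1)) := by
    intro j y hy0
    have hyα : (0:ℝ) < y ^ α := Real.rpow_pos_of_pos hy0 _
    have hyα1 : (0:ℝ) < y ^ (α - 1) := Real.rpow_pos_of_pos hy0 _
    have hne : α * ((j : ℝ) + 1) ≠ 0 := by positivity
    have hΓe : Real.Gamma (α * ((j + 1 : ℕ) : ℝ) + 1)
        = (α * ((j : ℝ) + 1)) * Real.Gamma (α * ((j : ℝ) + 1)) := by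
      rw [show (α * ((j + 1 : ℕ) : ℝ) + 1) = (α * ((j : ℝ) + 1)) + 1 by push_cast; ring,
        Real.Gamma_add_one hne]
    have hΓe0 : 0 < Real.Gamma (α * ((j : ℝ) + 1)) := Real.Gamma_pos_of_pos (by positivity)
    have e1 : (y ^ α) ^ j = y ^ (α * (j : ℝ)) := by
      rw [Real.rpow_mul hy0.le, Real.rpow_natCast]
    have e2 : y ^ (α * (j : ℝ)) * y ^ (α - 1) = y ^ (α * ((j : ℝ) + 1) - 1) := by
      rw [← Real.rpow_add hy0]; congr 1; ring
    simp only [hg', Nat.add_sub_cancel]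
    rw [Real.norm_eq_abs, abs_div, abs_of_pos (hΓpos (j + 1)), abs_mul, abs_mul, abs_pow,
      abs_mul, abs_neg, abs_mul, abs_neg, abs_mul, Nat.abs_cast, abs_of_pos hyα,
      abs_of_pos hα0, abs_of_pos hyα1, hΓe, mul_pow, e1, ← e2, pow_succ]
    field_simp
    push_cast; ring
  -- summability of the bound
  have husum : Summable u := by
    have h1 : Summable (fun j : ℕ => 2 / t * R * (R ^ j / Real.Gamma (α * j + α))) :=
      (ml_summable α α R hα0 hα0 hR0).mul_left _
    have h2 : (fun j : ℕ => u (j + 1)) =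
        fun j : ℕ => 2 / t * R * (R ^ j / Real.Gamma (α * j + α)) := by
      funext j
      simp only [hu, if_neg (Nat.succ_ne_zero j)]
      rw [show α * ((j + 1 : ℕ) : ℝ) = α * j + α by push_cast; ring, pow_succ]
      ring
    exact (summable_nat_add_iff 1).1 (h2 ▸ h1)
  -- the bound
  have hbound : ∀ k : ℕ, ∀ y : ℝ, y ∈ S → ‖g' k y‖ ≤ u k := by
    intro k y hy
    have hy0 : 0 < y := lt_trans ht2 hy.1
    cases k with
    | zero => simp [hg', hu]
    | succ j =>
      have hy1 : y < t + 1 := hy.2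
      have hΓe0 : 0 < Real.Gamma (α * ((j : ℝ) + 1)) := Real.Gamma_pos_of_pos (by positivity)
      have hE0 : (0:ℝ) ≤ α * ((j : ℝ) + 1) := by positivity
      have hRpow : R ^ (j + 1) = |lam| ^ (j + 1) * (t + 1) ^ (α * ((j : ℝ) + 1)) := by
        rw [hR, mul_pow]
        congr 1
        rw [← Real.rpow_natCast ((t + 1) ^ α) (j + 1), ← Real.rpow_mul (by positivity)]
        congr 1
        push_cast; ring
      have hyb : y ^ (α * ((j : ℝ) + 1) - 1) ≤ (t + 1) ^ (α * ((j : ℝ) + 1)) * (2 / t) := by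
        rw [Real.rpow_sub hy0, Real.rpow_one]
        calc y ^ (α * ((j : ℝ) + 1)) / y
            ≤ (t + 1) ^ (α * ((j : ℝ) + 1)) / (t / 2) := by
              apply div_le_div₀ (by positivity)
                (Real.rpow_le_rpow hy0.le hy1.le hE0) ht2 hy.1.le
          _ = (t + 1) ^ (α * ((j : ℝ) + 1)) * (2 / t) := by
              field_simp
      rw [hkey j y hy0]
      have hrhs : u (j + 1) =
          |lam| ^ (j + 1) * ((t + 1) ^ (α * ((j : ℝ) + 1)) * (2 / t)) /
            Real.Gamma (α * ((j : ℝ) + 1)) := by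
        simp only [hu, if_neg (Nat.succ_ne_zero j)]
        rw [show α * ((j + 1 : ℕ) : ℝ) = α * ((j : ℝ) + 1) by push_cast; ring, hRpow]
        ring
      rw [hrhs]
      gcongr
  have hg0sum : Summable fun k => g k t := ml_summable' α 1 (-lam * t ^ α) hα0 one_pos
  have main := hasDerivAt_tsum_of_isPreconnected husum isOpen_Ioo isPreconnected_Ioo
    hderiv hbound htS hg0sum htS
  have hsum' : Summable fun k => g' k t :=
    Summable.of_norm_bounded husum fun k => hbound k t htS
  have hval : ∑' k, g' k t = -lam * t ^ (α - 1) * mittagLeffler α α (-lam * t ^ α) := by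
    rw [Summable.tsum_eq_zero_add hsum']
    have h0 : g' 0 t = 0 := by simp [hg']
    rw [h0, zero_add]
    have hterm : ∀ j : ℕ, g' (j + 1) t =
        (-(lam * t ^ (α - 1))) * ((-lam * t ^ α) ^ j / Real.Gamma (α * j + α)) := by
      intro j
      have hne : α * ((j : ℝ) + 1) ≠ 0 := by positivity
      have hΓ0 : 0 < Real.Gamma (α * j + α) := Real.Gamma_pos_of_pos (by positivity)
      have hΓe : Real.Gamma (α * ((j + 1 : ℕ) : ℝ) + 1)
          = (α * ((j : ℝ) + 1)) * Real.Gamma (α * (j : ℝ) + α) := by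
        rw [show (α * ((j + 1 : ℕ) : ℝ) + 1) = (α * ((j : ℝ) + 1)) + 1 by push_cast; ring,
          Real.Gamma_add_one hne]
        congr 2
        ring
      simp only [hg', Nat.add_sub_cancel, hΓe]
      push_cast
      field_simp
    rw [tsum_congr hterm, tsum_mul_left]
    simp only [mittagLeffler]
    ring
  have hfun : (fun s : ℝ => mittagLeffler α 1 (-lam * s ^ α)) = fun z => ∑' k, g k z := by
    funext s
    simp only [mittagLeffler, hg]
  rw [hfun, ← hval]
  exact main
end
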